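/- arXiv:2103.01490 — 2 statements merged into one kernel-verified Lean document; each statement's English description precedes it below -/
import Mathlib

section
/- The relation ⊑₁^∞ on GR-processes of a net N, defined by P ⊑₁^∞ Q iff for every finite prefix P'' of P there exist finite GR-processes P', Q' with P'' ≤ P' ≡₁* Q' ≤ Q, is a preorder (reflexive and transitive). Consequently its kernel ≡₁^∞ is an equivalence relation. -/
/-- A place/transition net: places `S`, transitions `T`, flow relation given by
`pre t s = F(s,t)` and `post t s = F(t,s)`, and initial marking `M0`. Every
transition has a finite non-empty multiset of preplaces and a finite multiset
of postplaces. -/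
structure Net where
  S : Type
  T : Type
  pre : T → S → ℕ
  post : T → S → ℕ
  M0 : S → ℕ
  pre_fin : ∀ t, (Function.support (pre t)).Finite
  pre_ne : ∀ t, ∃ s, 0 < pre t s
  post_fin : ∀ t, (Function.support (post t)).Finite

namespace Net

/-- `•G`, the preset of a finite multiset of transitions. -/
def preStep (N : Net) (G : N.T →₀ ℕ) : N.S → ℕ := fun s => G.sum fun t n => n * N.pre t s

/-- `G•`, the postset of a finite multiset of transitions. -/
def postStep (N : Net) (G : N.T →₀ ℕ) : N.S → ℕ := fun s => G.sum fun t n => n * N.post t s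

/-- `G` is enabled at marking `M` : `•G ⊆ M`. -/
def Enabled (N : Net) (M : N.S → ℕ) (G : N.T →₀ ℕ) : Prop := ∀ s, N.preStep G s ≤ M s

/-- `M —G→ M'` : the non-empty finite multiset `G` is a step from `M` to `M'`. -/
def Step (N : Net) (M : N.S → ℕ) (G : N.T →₀ ℕ) (M' : N.S → ℕ) : Prop :=
  G ≠ 0 ∧ N.Enabled M G ∧ ∀ s, M' s = M s - N.preStep G s + N.postStep G s

/-- Firing a single transition. -/
def Fire (N : Net) (M : N.S → ℕ) (t : N.T) (M' : N.S → ℕ) : Prop :=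
  N.Step M (Finsupp.single t 1) M'

/-- Markings reachable from the initial marking by firing single transitions. -/
def Reachable (N : Net) (M : N.S → ℕ) : Prop :=
  Relation.ReflTransGen (fun M₁ M₂ => ∃ t, N.Fire M₁ t M₂) N.M0 M

/-- The finite non-empty multiset `G` is in semantic conflict at `M`. -/
def Conflict (N : Net) (M : N.S → ℕ) (G : N.T →₀ ℕ) : Prop :=
  G ≠ 0 ∧ ¬ N.Enabled M G ∧ ∀ t, 0 < G t → N.Enabled M (Finsupp.single t (G t))

def ConflictFree (N : Net) : Prop := ∀ M, N.Reachable M → ∀ G, ¬ N.Conflict M G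

def BinaryConflictFree (N : Net) : Prop :=
  ∀ M, N.Reachable M → ∀ G : N.T →₀ ℕ, (G.sum fun _ n => n) = 2 → ¬ N.Conflict M G

/-- Structural conflict net: transitions occurring together in a step at a reachable
marking have disjoint presets. -/
def StructuralConflictNet (N : Net) : Prop :=
  ∀ t u : N.T,
    (∃ M, N.Reachable M ∧ N.Enabled M (Finsupp.single t 1 + Finsupp.single u 1)) →
    ∀ s, min (N.pre t s) (N.pre u s) = 0

/-- A sufficiently large ambient type from which the places and transitions of
GR-processes of `N` are drawn. -/
def Amb (N : Net) : Type := Set (N.S ⊕ N.T ⊕ ℕ)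

end Net
/-- Raw data of a (Goltz-Reisig) process over a net `N` : an occurrence net
with places `pl` and transitions `tr` (subsets of an ambient type), flow
`Fst` (place → transition) and `Fts` (transition → place), and the process
mapping `piS`, `piT` into `N`. -/
structure RawProc (N : Net) where
  pl : Set N.Amb
  tr : Set N.Amb
  Fst : N.Amb → N.Amb → ℕ
  Fts : N.Amb → N.Amb → ℕ
  piS : N.Amb → N.S
  piT : N.Amb → N.T

namespace RawProc

variable {N : Net}

/-- The flow relation of the process (places tagged `inl`, transitions `inr`). -/
def rel (P : RawProc N) : (N.Amb ⊕ N.Amb) → (N.Amb ⊕ N.Amb) → Prop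
  | Sum.inl x, Sum.inr t => 0 < P.Fst x t
  | Sum.inr t, Sum.inl x => 0 < P.Fts t x
  | _, _ => False

/-- The causal order `ℱ⁺` of the process. -/
def causal (P : RawProc N) : (N.Amb ⊕ N.Amb) → (N.Amb ⊕ N.Amb) → Prop :=
  Relation.TransGen P.rel

/-- The initially marked places: those with empty preset. -/
def init (P : RawProc N) : Set N.Amb := {x | x ∈ P.pl ∧ ∀ t, P.Fts t x = 0}

/-- The end `P°` of the process: places with empty postset. -/
def ends (P : RawProc N) : Set N.Amb := {x | x ∈ P.pl ∧ ∀ t, P.Fst x t = 0}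

/-- The marking `ĤP = π(P°)` of the underlying net reached at the end of `P`. -/
noncomputable def endMark (P : RawProc N) : N.S → ℕ :=
  fun s => {x | x ∈ P.ends ∧ P.piS x = s}.ncard

/-- A process is finite iff its set of transitions is finite. -/
def FiniteP (P : RawProc N) : Prop := P.tr.Finite

open Classical in
/-- `swap P p q` : exchange the outgoing arcs of the places `p` and `q`. -/
noncomputable def swap (P : RawProc N) (p q : N.Amb) : RawProc N :=
  { P with Fst := fun x t => if x = p then P.Fst q t else if x = q then P.Fst p t else P.Fst x t }

end RawProc

/-- The conditions making a `RawProc` a GR-process of the net `N`. -/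
structure IsProc (N : Net) (P : RawProc N) : Prop where
  fst_dom : ∀ x t, 0 < P.Fst x t → x ∈ P.pl ∧ t ∈ P.tr
  fts_dom : ∀ t x, 0 < P.Fts t x → x ∈ P.pl ∧ t ∈ P.tr
  pre_unique : ∀ x t t', 0 < P.Fts t x → 0 < P.Fts t' x → t = t'
  pre_le_one : ∀ t x, P.Fts t x ≤ 1
  post_unique : ∀ x t t', 0 < P.Fst x t → 0 < P.Fst x t' → t = t'
  post_le_one : ∀ x t, P.Fst x t ≤ 1
  acyclic : ∀ z, ¬ P.causal z z
  finite_past : ∀ u ∈ P.tr, {t : N.Amb | P.causal (Sum.inr t) (Sum.inr u)}.Finite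
  init_fin : ∀ s : N.S, {x | x ∈ P.init ∧ P.piS x = s}.Finite
  init_marking : ∀ s : N.S, N.M0 s = {x | x ∈ P.init ∧ P.piS x = s}.ncard
  pre_fin : ∀ t ∈ P.tr, {x | 0 < P.Fst x t}.Finite
  post_fin : ∀ t ∈ P.tr, {x | 0 < P.Fts t x}.Finite
  pre_match : ∀ t ∈ P.tr, ∀ s : N.S, N.pre (P.piT t) s = ∑ᶠ x ∈ {x | P.piS x = s}, P.Fst x t
  post_match : ∀ t ∈ P.tr, ∀ s : N.S, N.post (P.piT t) s = ∑ᶠ x ∈ {x | P.piS x = s}, P.Fts t x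

/-- `ProcPrefix N Q P` : `Q ≤ P`, i.e. `Q` is a prefix of the process `P`. -/
def ProcPrefix (N : Net) (Q P : RawProc N) : Prop :=
  Q.pl ⊆ P.pl ∧ Q.tr ⊆ P.tr ∧
  (∀ x ∈ Q.pl, ∀ t ∈ Q.tr, Q.Fst x t = P.Fst x t ∧ Q.Fts t x = P.Fts t x) ∧
  (∀ x ∈ Q.pl, Q.piS x = P.piS x) ∧ (∀ t ∈ Q.tr, Q.piT t = P.piT t) ∧
  Q.init = P.init

/-- Isomorphism of processes: a bijection between places and between transitions
respecting the flow, the initial marking and the process mappings. -/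
def Iso (N : Net) (P Q : RawProc N) : Prop :=
  ∃ fp ft : N.Amb → N.Amb,
    Set.BijOn fp P.pl Q.pl ∧ Set.BijOn ft P.tr Q.tr ∧
    (∀ x ∈ P.pl, ∀ t ∈ P.tr,
      Q.Fst (fp x) (ft t) = P.Fst x t ∧ Q.Fts (ft t) (fp x) = P.Fts t x) ∧
    (∀ x ∈ P.pl, (x ∈ P.init ↔ fp x ∈ Q.init)) ∧
    (∀ x ∈ P.pl, Q.piS (fp x) = P.piS x) ∧ (∀ t ∈ P.tr, Q.piT (ft t) = P.piT t)

/-- `p` and `q` are causally unordered places with the same image, so they may be swapped. -/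
def Swappable {N : Net} (P : RawProc N) (p q : N.Amb) : Prop :=
  p ∈ P.pl ∧ q ∈ P.pl ∧ P.piS p = P.piS q ∧
  ¬ P.causal (Sum.inl p) (Sum.inl q) ∧ ¬ P.causal (Sum.inl q) (Sum.inl p)

/-- `P ∼__S Q` : `Q` is obtained from `P` by a single swap. -/
def SwapRel (N : Net) (P Q : RawProc N) : Prop :=
  ∃ p q, Swappable P p q ∧ Q = P.swap p q

/-- `P ≡₁ Q` : one-step swapping equivalence of GR-processes (swap followed by isomorphism). -/
def OneSwap (N : Net) (P Q : RawProc N) : Prop :=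
  IsProc N P ∧ IsProc N Q ∧ ∃ p q, Swappable P p q ∧ Iso N (P.swap p q) Q

/-- `P ≡₁* Q` : the reflexive-transitive closure of one-step swapping equivalence. -/
def SwapEqv (N : Net) : RawProc N → RawProc N → Prop :=
  Relation.ReflTransGen (OneSwap N)

/-- `P —a→ Q` : the process `Q` extends `P` by exactly one transition, labelled `a`. -/
def StepExt (N : Net) (P Q : RawProc N) (a : N.T) : Prop :=
  ProcPrefix N P Q ∧ ∃ t, t ∉ P.tr ∧ Q.tr = insert t P.tr ∧ Q.piT t = a

/-- `P ⊑₁^∞ Q` : every finite prefix `P''` of `P` satisfies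
`P'' ≤ P' ≡₁* Q' ≤ Q` for some finite GR-processes `P'`, `Q'`. -/
def SwapLe (N : Net) (P Q : RawProc N) : Prop :=
  ∀ P'' : RawProc N, IsProc N P'' → P''.FiniteP → ProcPrefix N P'' P →
    ∃ P' Q' : RawProc N, IsProc N P' ∧ P'.FiniteP ∧ IsProc N Q' ∧ Q'.FiniteP ∧
      ProcPrefix N P'' P' ∧ SwapEqv N P' Q' ∧ ProcPrefix N Q' Q

/-- `BDapprox N P` : the smallest set of finite GR-processes containing all finite
prefixes of `P` and closed under `≡₁` and under taking prefixes. -/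
inductive BDapprox (N : Net) (P : RawProc N) : RawProc N → Prop
  | base (Q : RawProc N) : IsProc N Q → Q.FiniteP → ProcPrefix N Q P → BDapprox N P Q
  | swapc (Q R : RawProc N) :
      BDapprox N P R → IsProc N Q → Q.FiniteP → OneSwap N Q R → BDapprox N P Q
  | prefc (Q R : RawProc N) :
      BDapprox N P R → IsProc N Q → Q.FiniteP → ProcPrefix N Q R → BDapprox N P Q

section Aux
open Sum RawProc
variable {N : Net}

open Classical in
noncomputable def tsw (p q x : N.Amb) : N.Amb := if x = p then q else if x = q then p else x

/-- transposition on the disjoint union, acting on places only -/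
noncomputable def ssw (p q : N.Amb) : (N.Amb ⊕ N.Amb) → (N.Amb ⊕ N.Amb)
  | Sum.inl x => Sum.inl (tsw p q x)
  | Sum.inr t => Sum.inr t

lemma tsw_p (p q : N.Amb) : tsw p q p = q := by simp [tsw]
lemma tsw_q (p q : N.Amb) : tsw p q q = p := by by_cases h : q = p <;> simp [tsw, h]
lemma tsw_other {p q x : N.Amb} (h1 : x ≠ p) (h2 : x ≠ q) : tsw p q x = x := by
  simp [tsw, h1, h2]

lemma tsw_invol (p q x : N.Amb) : tsw p q (tsw p q x) = x := by
  rcases eq_or_ne x p with rfl | h1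
  · rw [tsw_p, tsw_q]
  · rcases eq_or_ne x q with rfl | h2
    · rw [tsw_q, tsw_p]
    · rw [tsw_other h1 h2, tsw_other h1 h2]

lemma swap_Fst (P : RawProc N) (p q x t : N.Amb) :
    (P.swap p q).Fst x t = P.Fst (tsw p q x) t := by
  simp only [RawProc.swap, tsw]
  split_ifs <;> rfl

lemma rawProc_eq {P Q : RawProc N} (h1 : P.pl = Q.pl) (h2 : P.tr = Q.tr)
    (h3 : P.Fst = Q.Fst) (h4 : P.Fts = Q.Fts) (h5 : P.piS = Q.piS) (h6 : P.piT = Q.piT) :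
    P = Q := by
  cases P; cases Q; simp_all

@[simp] lemma swap_pl (P : RawProc N) (p q : N.Amb) : (P.swap p q).pl = P.pl := rfl
@[simp] lemma swap_tr (P : RawProc N) (p q : N.Amb) : (P.swap p q).tr = P.tr := rfl
@[simp] lemma swap_Fts (P : RawProc N) (p q : N.Amb) : (P.swap p q).Fts = P.Fts := rfl
@[simp] lemma swap_piS (P : RawProc N) (p q : N.Amb) : (P.swap p q).piS = P.piS := rfl
@[simp] lemma swap_piT (P : RawProc N) (p q : N.Amb) : (P.swap p q).piT = P.piT := rfl
@[simp] lemma swap_init (P : RawProc N) (p q : N.Amb) : (P.swap p q).init = P.init := rfl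

lemma swap_swap (P : RawProc N) (p q : N.Amb) : (P.swap p q).swap p q = P := by
  refine rawProc_eq rfl rfl ?_ rfl rfl rfl
  funext x t
  rw [swap_Fst, swap_Fst, tsw_invol]

lemma swap_rel_iff (P : RawProc N) (p q : N.Amb) (z w : N.Amb ⊕ N.Amb) :
    (P.swap p q).rel z w ↔ P.rel (ssw p q z) w := by
  cases z with
  | inl x =>
    cases w with
    | inl y => simp [RawProc.rel, ssw]
    | inr t => simp [RawProc.rel, ssw, swap_Fst]
  | inr t =>
    cases w with
    | inl y => simp [RawProc.rel, ssw]
    | inr u => simp [RawProc.rel, ssw]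

lemma ssw_other {p q : N.Amb} {z : N.Amb ⊕ N.Amb}
    (h1 : z ≠ Sum.inl p) (h2 : z ≠ Sum.inl q) : ssw p q z = z := by
  cases z with
  | inl x =>
    simp only [ssw]
    rw [tsw_other (fun h => h1 (by rw [h])) (fun h => h2 (by rw [h]))]
  | inr t => rfl

/-- Decomposition of a path in the swapped process: either it translates directly,
or it first reaches `p` or `q`. -/
lemma claimM2 {P : RawProc N} {p q : N.Amb} {z w : N.Amb ⊕ N.Amb}
    (h : (P.swap p q).causal z w) :
    P.causal (ssw p q z) w ∨
      ∃ a, (a = Sum.inl p ∨ a = Sum.inl q) ∧ P.causal (ssw p q z) a ∧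
        Relation.ReflTransGen (P.swap p q).rel a w := by
  induction h using Relation.TransGen.head_induction_on with
  | single hzw =>
    exact Or.inl (Relation.TransGen.single ((swap_rel_iff P p q _ _).1 hzw))
  | head hzy hyw IH =>
    rename_i z' y
    by_cases hy : y = Sum.inl p ∨ y = Sum.inl q
    · exact Or.inr ⟨y, hy, Relation.TransGen.single ((swap_rel_iff P p q _ _).1 hzy),
        hyw.to_reflTransGen⟩
    · push_neg at hy
      have hyy : ssw p q y = y := ssw_other hy.1 hy.2
      rcases IH with h1 | ⟨a, ha, h1, h2⟩
      · exact Or.inl (Relation.TransGen.head ((swap_rel_iff P p q _ _).1 hzy) (hyy ▸ h1))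
      · exact Or.inr ⟨a, ha, Relation.TransGen.head ((swap_rel_iff P p q _ _).1 hzy)
          (hyy ▸ h1), h2⟩

lemma patterns {P : RawProc N} {p q : N.Amb}
    (hac : ∀ z, ¬ P.causal z z)
    (hpq : ¬ P.causal (Sum.inl p) (Sum.inl q)) (hqp : ¬ P.causal (Sum.inl q) (Sum.inl p))
    {a b : N.Amb ⊕ N.Amb} (ha : a = Sum.inl p ∨ a = Sum.inl q)
    (hb : b = Sum.inl p ∨ b = Sum.inl q) : ¬ P.causal (ssw p q a) b := by
  rcases ha with rfl | rfl <;> rcases hb with rfl | rfl <;>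
    simp only [ssw, tsw_p, tsw_q]
  · exact hqp
  · exact hac _
  · exact hac _
  · exact hpq

lemma swap_acyclic {P : RawProc N} {p q : N.Amb}
    (hac : ∀ z, ¬ P.causal z z)
    (hpq : ¬ P.causal (Sum.inl p) (Sum.inl q)) (hqp : ¬ P.causal (Sum.inl q) (Sum.inl p)) :
    ∀ z, ¬ (P.swap p q).causal z z := by
  intro z h
  by_cases hz : z = Sum.inl p ∨ z = Sum.inl q
  · rcases claimM2 h with h1 | ⟨a, ha, h1, _⟩
    · exact patterns (a := z) (b := z) hac hpq hqp hz hz h1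
    · exact patterns (a := z) (b := a) hac hpq hqp hz ha h1
  · push_neg at hz
    have hzz : ssw p q z = z := ssw_other hz.1 hz.2
    rcases claimM2 h with h1 | ⟨a, ha, h1, h2⟩
    · exact hac z (by rw [hzz] at h1; exact h1)
    · -- h2 : ReflTransGen from a to z; a ≠ z since a ∈ {p,q}
      rcases h2.cases_head with rfl | ⟨c, hc1, hc2⟩
      · rcases ha with rfl | rfl
        · exact hz.1 rfl
        · exact hz.2 rfl
      · have h3 : (P.swap p q).causal a z := Relation.TransGen.head' hc1 hc2
        rcases claimM2 h3 with h4 | ⟨b, hb, h4, _⟩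
        · -- P.causal (ssw a) z and P.causal z a  (hzz ▸ h1)
          have : P.causal (ssw p q a) a := h4.trans (hzz ▸ h1)
          exact patterns hac hpq hqp ha ha this
        · exact patterns hac hpq hqp ha hb h4

lemma swap_unordered {P : RawProc N} {p q : N.Amb}
    (hac : ∀ z, ¬ P.causal z z)
    (hpq : ¬ P.causal (Sum.inl p) (Sum.inl q)) (hqp : ¬ P.causal (Sum.inl q) (Sum.inl p)) :
    ¬ (P.swap p q).causal (Sum.inl p) (Sum.inl q) ∧
    ¬ (P.swap p q).causal (Sum.inl q) (Sum.inl p) := by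
  constructor
  · intro h
    rcases claimM2 h with h1 | ⟨a, ha, h1, _⟩
    · exact hac _ (by simpa [ssw, tsw_p] using h1)
    · exact patterns hac hpq hqp (Or.inl rfl) ha h1
  · intro h
    rcases claimM2 h with h1 | ⟨a, ha, h1, _⟩
    · exact hac _ (by simpa [ssw, tsw_q] using h1)
    · exact patterns hac hpq hqp (Or.inr rfl) ha h1

end Aux
section Aux2
open Sum RawProc Set
variable {N : Net}

lemma rel_to_inl {P : RawProc N} {z : N.Amb ⊕ N.Amb} {x : N.Amb}
    (h : P.rel z (Sum.inl x)) : ∃ t, z = Sum.inr t ∧ 0 < P.Fts t x := by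
  cases z with
  | inl y => exact absurd h (by simp [RawProc.rel])
  | inr t => exact ⟨t, rfl, h⟩

lemma rel_to_inr {P : RawProc N} {z : N.Amb ⊕ N.Amb} {t : N.Amb}
    (h : P.rel z (Sum.inr t)) : ∃ x, z = Sum.inl x ∧ 0 < P.Fst x t := by
  cases z with
  | inl y => exact ⟨y, rfl, h⟩
  | inr u => exact absurd h (by simp [RawProc.rel])

lemma rel_from_inl {P : RawProc N} {z : N.Amb ⊕ N.Amb} {x : N.Amb}
    (h : P.rel (Sum.inl x) z) : ∃ t, z = Sum.inr t ∧ 0 < P.Fst x t := by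
  cases z with
  | inl y => exact absurd h (by simp [RawProc.rel])
  | inr t => exact ⟨t, rfl, h⟩

lemma rel_from_inr {P : RawProc N} {z : N.Amb ⊕ N.Amb} {t : N.Amb}
    (h : P.rel (Sum.inr t) z) : ∃ x, z = Sum.inl x ∧ 0 < P.Fts t x := by
  cases z with
  | inl y => exact ⟨y, rfl, h⟩
  | inr u => exact absurd h (by simp [RawProc.rel])

lemma causal_last {P : RawProc N} {z w : N.Amb ⊕ N.Amb} (h : P.causal z w) :
    ∀ x, w = Sum.inl x → ∃ t, 0 < P.Fts t x ∧ (z = Sum.inr t ∨ P.causal z (Sum.inr t)) := by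
  induction h with
  | single h1 =>
    intro x hx; subst hx
    obtain ⟨t, rfl, ht⟩ := rel_to_inl h1
    exact ⟨t, ht, Or.inl rfl⟩
  | tail h1 h2 IH =>
    intro x hx; subst hx
    obtain ⟨t, rfl, ht⟩ := rel_to_inl h2
    exact ⟨t, ht, Or.inr h1⟩

lemma place_past_fin {P : RawProc N} (hP : IsProc N P) (x : N.Amb) :
    {t : N.Amb | P.causal (Sum.inr t) (Sum.inl x)}.Finite := by
  by_cases hin : ∃ t0, 0 < P.Fts t0 x
  · obtain ⟨t0, ht0⟩ := hin
    have hsub : {t : N.Amb | P.causal (Sum.inr t) (Sum.inl x)} ⊆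
        {t0} ∪ {t | P.causal (Sum.inr t) (Sum.inr t0)} := by
      intro t ht
      obtain ⟨t', h1, h2⟩ := causal_last ht x rfl
      have : t' = t0 := hP.pre_unique x t' t0 h1 ht0
      subst this
      rcases h2 with h2 | h2
      · exact Or.inl (by simpa using (Sum.inr.inj h2))
      · exact Or.inr h2
    exact Set.Finite.subset (Set.Finite.union (Set.finite_singleton _)
      (hP.finite_past t0 (hP.fts_dom t0 x ht0).2)) hsub
  · push_neg at hin
    have : {t : N.Amb | P.causal (Sum.inr t) (Sum.inl x)} = ∅ := by
      ext t; simp only [Set.mem_setOf_eq, Set.mem_empty_iff_false, iff_false]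
      intro ht
      obtain ⟨t', h1, _⟩ := causal_last ht x rfl
      exact absurd h1 (by simp [hin t'])
    rw [this]; exact Set.finite_empty

/-- The swap of a process at a swappable pair is again a process. -/
lemma isProc_swap {P : RawProc N} (hP : IsProc N P) {p q : N.Amb} (hsw : Swappable P p q) :
    IsProc N (P.swap p q) := by
  obtain ⟨hp, hq, hpiS, hpq, hqp⟩ := hsw
  have htsw_pl : ∀ x : N.Amb, tsw p q x ∈ P.pl ↔ x ∈ P.pl := by
    intro x
    rcases eq_or_ne x p with rfl | h1
    · rw [tsw_p]; exact ⟨fun _ => hp, fun _ => hq⟩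
    · rcases eq_or_ne x q with rfl | h2
      · rw [tsw_q]; exact ⟨fun _ => hq, fun _ => hp⟩
      · rw [tsw_other h1 h2]
  refine ⟨?_, ?_, ?_, ?_, ?_, ?_, ?_, ?_, ?_, ?_, ?_, ?_, ?_, ?_⟩
  · intro x t h
    rw [swap_Fst] at h
    obtain ⟨h1, h2⟩ := hP.fst_dom _ _ h
    exact ⟨(htsw_pl x).1 h1, h2⟩
  · exact hP.fts_dom
  · exact hP.pre_unique
  · exact hP.pre_le_one
  · intro x t t' h h'
    rw [swap_Fst] at h h'
    exact hP.post_unique _ _ _ h h'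
  · intro x t; rw [swap_Fst]; exact hP.post_le_one _ _
  · exact swap_acyclic hP.acyclic hpq hqp
  · -- finite_past
    intro u hu
    have hsub : {t : N.Amb | (P.swap p q).causal (Sum.inr t) (Sum.inr u)} ⊆
        {t | P.causal (Sum.inr t) (Sum.inr u)} ∪
        ({t | P.causal (Sum.inr t) (Sum.inl p)} ∪ {t | P.causal (Sum.inr t) (Sum.inl q)}) := by
      intro t ht
      rcases claimM2 ht with h1 | ⟨a, ha, h1, _⟩
      · exact Or.inl (by simpa [ssw] using h1)
      · rcases ha with rfl | rfl
        · exact Or.inr (Or.inl (by simpa [ssw] using h1))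
        · exact Or.inr (Or.inr (by simpa [ssw] using h1))
    exact Set.Finite.subset (Set.Finite.union (hP.finite_past u hu)
      (Set.Finite.union (place_past_fin hP p) (place_past_fin hP q))) hsub
  · exact hP.init_fin
  · exact hP.init_marking
  · -- pre_fin
    intro t ht
    have : {x : N.Amb | 0 < (P.swap p q).Fst x t} ⊆ tsw p q '' {x | 0 < P.Fst x t} := by
      intro x hx
      rw [Set.mem_setOf_eq, swap_Fst] at hx
      exact ⟨tsw p q x, hx, tsw_invol p q x⟩
    exact Set.Finite.subset (Set.Finite.image _ (hP.pre_fin t ht)) this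
  · exact hP.post_fin
  · -- pre_match
    intro t ht s
    have hbij : Set.BijOn (tsw p q) {x : N.Amb | P.piS x = s} {x : N.Amb | P.piS x = s} := by
      have hmaps : ∀ x : N.Amb, P.piS x = s → P.piS (tsw p q x) = s := by
        intro x hx
        rcases eq_or_ne x p with rfl | h1
        · rw [tsw_p, ← hpiS]; exact hx
        · rcases eq_or_ne x q with rfl | h2
          · rw [tsw_q, hpiS]; exact hx
          · rw [tsw_other h1 h2]; exact hx
      refine ⟨fun x hx => hmaps x hx, fun x _ y _ hxy => ?_, fun x hx => ?_⟩
      · have := congrArg (tsw p q) hxy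
        rwa [tsw_invol, tsw_invol] at this
      · exact ⟨tsw p q x, hmaps x hx, tsw_invol p q x⟩
    have := finsum_mem_eq_of_bijOn (tsw p q) hbij
      (f := fun x => (P.swap p q).Fst x t) (g := fun x => P.Fst x t)
      (fun x _ => swap_Fst P p q x t)
    show N.pre (P.piT t) s = ∑ᶠ x ∈ {x | P.piS x = s}, (P.swap p q).Fst x t
    exact (hP.pre_match t ht s).trans this.symm
  · -- post_match
    exact hP.post_match

/-- p,q stay swappable in the swapped process. -/
lemma swappable_swap {P : RawProc N} (hac : ∀ z, ¬ P.causal z z) {p q : N.Amb}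
    (hsw : Swappable P p q) : Swappable (P.swap p q) p q := by
  obtain ⟨hp, hq, hpiS, hpq, hqp⟩ := hsw
  obtain ⟨h1, h2⟩ := swap_unordered hac hpq hqp
  exact ⟨hp, hq, hpiS, h1, h2⟩

lemma procPrefix_refl (P : RawProc N) : ProcPrefix N P P :=
  ⟨subset_rfl, subset_rfl, fun _ _ _ _ => ⟨rfl, rfl⟩, fun _ _ => rfl, fun _ _ => rfl, rfl⟩

lemma procPrefix_trans {P Q R : RawProc N} (h1 : ProcPrefix N P Q) (h2 : ProcPrefix N Q R) :
    ProcPrefix N P R := by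
  obtain ⟨a1, b1, c1, d1, e1, f1⟩ := h1
  obtain ⟨a2, b2, c2, d2, e2, f2⟩ := h2
  refine ⟨a1.trans a2, b1.trans b2, ?_, ?_, ?_, f1.trans f2⟩
  · intro x hx t htr
    obtain ⟨u1, v1⟩ := c1 x hx t htr
    obtain ⟨u2, v2⟩ := c2 x (a1 hx) t (b1 htr)
    exact ⟨u1.trans u2, v1.trans v2⟩
  · intro x hx; rw [d1 x hx, d2 x (a1 hx)]
  · intro t ht; rw [e1 t ht, e2 t (b1 ht)]

/-- Swapping commutes with prefixes when both places are in the prefix. -/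
lemma swap_procPrefix {P Q : RawProc N} (h : ProcPrefix N P Q) {p q : N.Amb}
    (hp : p ∈ P.pl) (hq : q ∈ P.pl) :
    ProcPrefix N (P.swap p q) (Q.swap p q) := by
  obtain ⟨a, b, c, d, e, f⟩ := h
  refine ⟨a, b, ?_, d, e, f⟩
  intro x hx t ht
  rw [swap_Fst, swap_Fst]
  constructor
  · rcases eq_or_ne x p with rfl | h1
    · rw [tsw_p]; exact (c q hq t ht).1
    · rcases eq_or_ne x q with rfl | h2
      · rw [tsw_q]; exact (c p hp t ht).1
      · rw [tsw_other h1 h2]; exact (c x hx t ht).1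
  · exact (c x hx t ht).2

end Aux2
section Aux3
open Sum RawProc Set
variable {N : Net}

/-- membership of a node of the union type in a process -/
def InPr (B : RawProc N) : (N.Amb ⊕ N.Amb) → Prop := Sum.elim (· ∈ B.pl) (· ∈ B.tr)

lemma prefix_fts_closed {B Y : RawProc N} (hB : IsProc N B) (hY : IsProc N Y)
    (h : ProcPrefix N B Y) {x t : N.Amb} (hx : x ∈ B.pl) (ht : 0 < Y.Fts t x) :
    t ∈ B.tr ∧ 0 < B.Fts t x := by
  obtain ⟨hpl, htr, hflow, hpiS, hpiT, hinit⟩ := h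
  by_cases hxi : x ∈ B.init
  · rw [hinit] at hxi
    exact absurd ht (by simp [hxi.2 t])
  · have : ¬ ∀ t', B.Fts t' x = 0 := fun hall => hxi ⟨hx, hall⟩
    push_neg at this
    obtain ⟨t', ht'⟩ := this
    have ht'pos : 0 < B.Fts t' x := Nat.pos_of_ne_zero ht'
    have ht'tr : t' ∈ B.tr := (hB.fts_dom t' x ht'pos).2
    have hYt' : 0 < Y.Fts t' x := by rw [← (hflow x hx t' ht'tr).2]; exact ht'pos
    have : t = t' := hY.pre_unique x t t' ht hYt'
    subst this
    exact ⟨ht'tr, ht'pos⟩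

lemma prefix_fst_closed {B Y : RawProc N} (hB : IsProc N B) (hY : IsProc N Y)
    (h : ProcPrefix N B Y) {x t : N.Amb} (ht : t ∈ B.tr) (hx : 0 < Y.Fst x t) :
    x ∈ B.pl ∧ 0 < B.Fst x t := by
  obtain ⟨hpl, htr, hflow, hpiS, hpiT, hinit⟩ := h
  set s := Y.piS x with hs
  have hYt : t ∈ Y.tr := htr ht
  have hsupB : ({y : N.Amb | B.piS y = s} ∩ Function.support (fun y => B.Fst y t)).Finite := by
    apply Set.Finite.subset (hB.pre_fin t ht)
    intro y hy
    exact Nat.pos_of_ne_zero hy.2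
  have hsupY : ({y : N.Amb | Y.piS y = s} ∩ Function.support (fun y => Y.Fst y t)).Finite := by
    apply Set.Finite.subset (hY.pre_fin t hYt)
    intro y hy
    exact Nat.pos_of_ne_zero hy.2
  have h1 : ∑ᶠ y ∈ {y : N.Amb | B.piS y = s}, B.Fst y t = ∑ y ∈ hsupB.toFinset, B.Fst y t :=
    finsum_mem_eq_sum _ hsupB
  have h2 : ∑ᶠ y ∈ {y : N.Amb | Y.piS y = s}, Y.Fst y t = ∑ y ∈ hsupY.toFinset, Y.Fst y t :=
    finsum_mem_eq_sum _ hsupY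
  have hmem : ∀ y ∈ hsupB.toFinset, y ∈ B.pl ∧ 0 < B.Fst y t ∧ B.piS y = s := by
    intro y hy
    rw [Set.Finite.mem_toFinset] at hy
    have hpos : 0 < B.Fst y t := Nat.pos_of_ne_zero hy.2
    exact ⟨(hB.fst_dom y t hpos).1, hpos, hy.1⟩
  have hsub : hsupB.toFinset ⊆ hsupY.toFinset := by
    intro y hy
    obtain ⟨hypl, hypos, hyps⟩ := hmem y hy
    rw [Set.Finite.mem_toFinset]
    have : 0 < Y.Fst y t := by rw [← (hflow y hypl t ht).1]; exact hypos
    refine ⟨?_, fun hc => by simp [hc] at this⟩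
    show Y.piS y = s
    rw [← hpiS y hypl]; exact hyps
  have hvals : ∀ y ∈ hsupB.toFinset, B.Fst y t = Y.Fst y t := by
    intro y hy
    exact (hflow y (hmem y hy).1 t ht).1
  have heq : ∑ y ∈ hsupB.toFinset, Y.Fst y t = ∑ y ∈ hsupY.toFinset, Y.Fst y t := by
    rw [← Finset.sum_congr rfl hvals, ← h1]
    have hBmatch := hB.pre_match t ht s
    have hYmatch := hY.pre_match t hYt s
    rw [hpiT t ht] at hBmatch
    rw [← hBmatch, hYmatch, h2]
  by_contra hcon
  have hxY : x ∈ hsupY.toFinset := by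
    rw [Set.Finite.mem_toFinset]
    exact ⟨rfl, fun hc => by simp [hc] at hx⟩
  have hxB : x ∉ hsupB.toFinset := by
    intro hxB
    obtain ⟨h1', h2', _⟩ := hmem x hxB
    exact hcon ⟨h1', h2'⟩
  have : ∑ y ∈ hsupB.toFinset, Y.Fst y t < ∑ y ∈ hsupY.toFinset, Y.Fst y t :=
    Finset.sum_lt_sum_of_subset hsub hxY hxB hx (fun _ _ _ => Nat.zero_le _)
  omega

lemma prefix_rel_closed {B Y : RawProc N} (hB : IsProc N B) (hY : IsProc N Y)
    (h : ProcPrefix N B Y) {z w : N.Amb ⊕ N.Amb} (hrel : Y.rel z w) (hw : InPr B w) :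
    InPr B z ∧ B.rel z w := by
  cases w with
  | inl x =>
    obtain ⟨t, rfl, ht⟩ := rel_to_inl hrel
    obtain ⟨h1, h2⟩ := prefix_fts_closed hB hY h hw ht
    exact ⟨h1, h2⟩
  | inr t =>
    obtain ⟨x, rfl, hx⟩ := rel_to_inr hrel
    obtain ⟨h1, h2⟩ := prefix_fst_closed hB hY h hw hx
    exact ⟨h1, h2⟩

lemma prefix_causal_closed {B Y : RawProc N} (hB : IsProc N B) (hY : IsProc N Y)
    (h : ProcPrefix N B Y) {z w : N.Amb ⊕ N.Amb} (hc : Y.causal z w) (hw : InPr B w) :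
    InPr B z ∧ B.causal z w := by
  induction hc with
  | single h1 =>
    obtain ⟨h2, h3⟩ := prefix_rel_closed hB hY h h1 hw
    exact ⟨h2, Relation.TransGen.single h3⟩
  | tail h1 h2 IH =>
    obtain ⟨hb, h3⟩ := prefix_rel_closed hB hY h h2 hw
    obtain ⟨h4, h5⟩ := IH hb
    exact ⟨h4, h5.tail h3⟩

end Aux3
section Aux4
open Sum RawProc Set
variable {N : Net}

/-- combined map on nodes -/
def FFm (fp ft : N.Amb → N.Amb) : (N.Amb ⊕ N.Amb) → (N.Amb ⊕ N.Amb) :=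
  Sum.elim (fun x => Sum.inl (fp x)) (fun t => Sum.inr (ft t))

lemma FFm_inj {P : RawProc N} {fp ft : N.Amb → N.Amb}
    (hip : Set.InjOn fp P.pl) (hit : Set.InjOn ft P.tr)
    {z w : N.Amb ⊕ N.Amb} (hz : InPr P z) (hw : InPr P w) (h : FFm fp ft z = FFm fp ft w) :
    z = w := by
  cases z with
  | inl x =>
    cases w with
    | inl y => simp only [FFm, Sum.elim_inl, Sum.inl.injEq] at h ⊢; exact hip hz hw h
    | inr t => simp [FFm] at h
  | inr t =>
    cases w with
    | inl y => simp [FFm] at h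
    | inr u => simp only [FFm, Sum.elim_inr, Sum.inr.injEq] at h ⊢; exact hit hz hw h

lemma iso_rel_back {P Q : RawProc N} {fp ft : N.Amb → N.Amb}
    (hbp : Set.BijOn fp P.pl Q.pl) (hbt : Set.BijOn ft P.tr Q.tr)
    (hflow : ∀ x ∈ P.pl, ∀ t ∈ P.tr,
      Q.Fst (fp x) (ft t) = P.Fst x t ∧ Q.Fts (ft t) (fp x) = P.Fts t x)
    (hdst : ∀ x t, 0 < Q.Fst x t → x ∈ Q.pl ∧ t ∈ Q.tr)
    (hdts : ∀ t x, 0 < Q.Fts t x → x ∈ Q.pl ∧ t ∈ Q.tr)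
    {z w : N.Amb ⊕ N.Amb} (h : Q.rel z w) :
    ∃ z₀ w₀, InPr P z₀ ∧ InPr P w₀ ∧ z = FFm fp ft z₀ ∧ w = FFm fp ft w₀ ∧ P.rel z₀ w₀ := by
  cases z with
  | inl x =>
    obtain ⟨t, rfl, ht⟩ := rel_from_inl h
    obtain ⟨hxQ, htQ⟩ := hdst x t ht
    obtain ⟨x₀, hx₀, rfl⟩ := hbp.surjOn hxQ
    obtain ⟨t₀, ht₀, rfl⟩ := hbt.surjOn htQ
    refine ⟨Sum.inl x₀, Sum.inr t₀, hx₀, ht₀, rfl, rfl, ?_⟩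
    show 0 < P.Fst x₀ t₀
    rw [← (hflow x₀ hx₀ t₀ ht₀).1]; exact ht
  | inr t =>
    obtain ⟨x, rfl, hx⟩ := rel_from_inr h
    obtain ⟨hxQ, htQ⟩ := hdts t x hx
    obtain ⟨x₀, hx₀, rfl⟩ := hbp.surjOn hxQ
    obtain ⟨t₀, ht₀, rfl⟩ := hbt.surjOn htQ
    refine ⟨Sum.inr t₀, Sum.inl x₀, ht₀, hx₀, rfl, rfl, ?_⟩
    show 0 < P.Fts t₀ x₀
    rw [← (hflow x₀ hx₀ t₀ ht₀).2]; exact hx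

lemma iso_causal_back {P Q : RawProc N} {fp ft : N.Amb → N.Amb}
    (hbp : Set.BijOn fp P.pl Q.pl) (hbt : Set.BijOn ft P.tr Q.tr)
    (hflow : ∀ x ∈ P.pl, ∀ t ∈ P.tr,
      Q.Fst (fp x) (ft t) = P.Fst x t ∧ Q.Fts (ft t) (fp x) = P.Fts t x)
    (hdst : ∀ x t, 0 < Q.Fst x t → x ∈ Q.pl ∧ t ∈ Q.tr)
    (hdts : ∀ t x, 0 < Q.Fts t x → x ∈ Q.pl ∧ t ∈ Q.tr)
    {z w : N.Amb ⊕ N.Amb} (h : Q.causal z w) :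
    ∀ z₀, InPr P z₀ → z = FFm fp ft z₀ →
      ∃ w₀, InPr P w₀ ∧ w = FFm fp ft w₀ ∧ P.causal z₀ w₀ := by
  induction h with
  | single h1 =>
    intro z₀ hz₀ hzz
    obtain ⟨z₁, w₁, hz₁, hw₁, hze, hwe, hr⟩ := iso_rel_back hbp hbt hflow hdst hdts h1
    have : z₀ = z₁ := FFm_inj hbp.injOn hbt.injOn hz₀ hz₁ (hzz ▸ hze)
    subst this
    exact ⟨w₁, hw₁, hwe, Relation.TransGen.single hr⟩
  | tail h1 h2 IH =>
    intro z₀ hz₀ hzz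
    obtain ⟨m₀, hm₀, hme, hcz⟩ := IH z₀ hz₀ hzz
    obtain ⟨m₁, w₁, hm₁, hw₁, hme', hwe, hr⟩ := iso_rel_back hbp hbt hflow hdst hdts h2
    have : m₀ = m₁ := FFm_inj hbp.injOn hbt.injOn hm₀ hm₁ (hme ▸ hme')
    subst this
    exact ⟨w₁, hw₁, hwe, hcz.tail hr⟩

/-- Transport of `IsProc` along an isomorphism onto a process with no junk flow. -/
lemma isProc_transport {P Q : RawProc N} (hP : IsProc N P) {fp ft : N.Amb → N.Amb}
    (hbp : Set.BijOn fp P.pl Q.pl) (hbt : Set.BijOn ft P.tr Q.tr)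
    (hflow : ∀ x ∈ P.pl, ∀ t ∈ P.tr,
      Q.Fst (fp x) (ft t) = P.Fst x t ∧ Q.Fts (ft t) (fp x) = P.Fts t x)
    (hpiS : ∀ x ∈ P.pl, Q.piS (fp x) = P.piS x) (hpiT : ∀ t ∈ P.tr, Q.piT (ft t) = P.piT t)
    (h0st : ∀ x t, ¬(x ∈ Q.pl ∧ t ∈ Q.tr) → Q.Fst x t = 0)
    (h0ts : ∀ t x, ¬(x ∈ Q.pl ∧ t ∈ Q.tr) → Q.Fts t x = 0) :
    IsProc N Q ∧ Q.init = fp '' P.init ∧ Iso N P Q := by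
  have hdst : ∀ x t, 0 < Q.Fst x t → x ∈ Q.pl ∧ t ∈ Q.tr := by
    intro x t h
    by_contra hc
    rw [h0st x t hc] at h; exact absurd h (lt_irrefl 0)
  have hdts : ∀ t x, 0 < Q.Fts t x → x ∈ Q.pl ∧ t ∈ Q.tr := by
    intro t x h
    by_contra hc
    rw [h0ts t x hc] at h; exact absurd h (lt_irrefl 0)
  have hinit : Q.init = fp '' P.init := by
    ext x
    constructor
    · rintro ⟨hxQ, hxi⟩
      obtain ⟨y, hy, rfl⟩ := hbp.surjOn hxQ
      refine ⟨y, ⟨hy, fun t => ?_⟩, rfl⟩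
      by_contra hc
      have hpos : 0 < P.Fts t y := Nat.pos_of_ne_zero hc
      have htP : t ∈ P.tr := (hP.fts_dom t y hpos).2
      have : 0 < Q.Fts (ft t) (fp y) := by rw [(hflow y hy t htP).2]; exact hpos
      rw [hxi (ft t)] at this; exact absurd this (lt_irrefl 0)
    · rintro ⟨y, ⟨hy, hyi⟩, rfl⟩
      refine ⟨hbp.mapsTo hy, fun t => ?_⟩
      by_contra hc
      have hpos : 0 < Q.Fts t (fp y) := Nat.pos_of_ne_zero hc
      obtain ⟨_, htQ⟩ := hdts t (fp y) hpos
      obtain ⟨t₀, ht₀, rfl⟩ := hbt.surjOn htQ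
      rw [(hflow y hy t₀ ht₀).2, hyi t₀] at hpos
      exact absurd hpos (lt_irrefl 0)
  have hinitset : ∀ s : N.S, {x | x ∈ Q.init ∧ Q.piS x = s}
      = fp '' {y | y ∈ P.init ∧ P.piS y = s} := by
    intro s
    ext x
    constructor
    · rintro ⟨hxi, hxs⟩
      rw [hinit] at hxi
      obtain ⟨y, hyi, rfl⟩ := hxi
      exact ⟨y, ⟨hyi, by rw [← hpiS y hyi.1]; exact hxs⟩, rfl⟩
    · rintro ⟨y, ⟨hyi, hys⟩, rfl⟩
      refine ⟨by rw [hinit]; exact ⟨y, hyi, rfl⟩, by rw [hpiS y hyi.1]; exact hys⟩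
  refine ⟨⟨hdst, hdts, ?_, ?_, ?_, ?_, ?_, ?_, ?_, ?_, ?_, ?_, ?_, ?_⟩, hinit, ?_⟩
  · -- pre_unique
    intro x t t' h h'
    obtain ⟨hxQ, htQ⟩ := hdts t x h
    obtain ⟨_, htQ'⟩ := hdts t' x h'
    obtain ⟨x₀, hx₀, rfl⟩ := hbp.surjOn hxQ
    obtain ⟨t₀, ht₀, rfl⟩ := hbt.surjOn htQ
    obtain ⟨t₁, ht₁, rfl⟩ := hbt.surjOn htQ'
    rw [(hflow x₀ hx₀ t₀ ht₀).2] at h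
    rw [(hflow x₀ hx₀ t₁ ht₁).2] at h'
    rw [hP.pre_unique x₀ t₀ t₁ h h']
  · -- pre_le_one
    intro t x
    rcases Nat.eq_zero_or_pos (Q.Fts t x) with h | h
    · omega
    · obtain ⟨hxQ, htQ⟩ := hdts t x h
      obtain ⟨x₀, hx₀, rfl⟩ := hbp.surjOn hxQ
      obtain ⟨t₀, ht₀, rfl⟩ := hbt.surjOn htQ
      rw [(hflow x₀ hx₀ t₀ ht₀).2]
      exact hP.pre_le_one t₀ x₀
  · -- post_unique
    intro x t t' h h'
    obtain ⟨hxQ, htQ⟩ := hdst x t h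
    obtain ⟨_, htQ'⟩ := hdst x t' h'
    obtain ⟨x₀, hx₀, rfl⟩ := hbp.surjOn hxQ
    obtain ⟨t₀, ht₀, rfl⟩ := hbt.surjOn htQ
    obtain ⟨t₁, ht₁, rfl⟩ := hbt.surjOn htQ'
    rw [(hflow x₀ hx₀ t₀ ht₀).1] at h
    rw [(hflow x₀ hx₀ t₁ ht₁).1] at h'
    rw [hP.post_unique x₀ t₀ t₁ h h']
  · -- post_le_one
    intro x t
    rcases Nat.eq_zero_or_pos (Q.Fst x t) with h | h
    · omega
    · obtain ⟨hxQ, htQ⟩ := hdst x t h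
      obtain ⟨x₀, hx₀, rfl⟩ := hbp.surjOn hxQ
      obtain ⟨t₀, ht₀, rfl⟩ := hbt.surjOn htQ
      rw [(hflow x₀ hx₀ t₀ ht₀).1]
      exact hP.post_le_one x₀ t₀
  · -- acyclic
    intro z h
    have hz : InPr Q z := by
      rcases (Relation.TransGen.head'_iff.mp h) with ⟨y, hzy, _⟩
      cases z with
      | inl x =>
        obtain ⟨t, rfl, ht⟩ := rel_from_inl hzy
        exact (hdst x t ht).1
      | inr t =>
        obtain ⟨x, rfl, hx⟩ := rel_from_inr hzy
        exact (hdts t x hx).2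
    have : ∃ z₀, InPr P z₀ ∧ z = FFm fp ft z₀ := by
      cases z with
      | inl x =>
        obtain ⟨x₀, hx₀, rfl⟩ := hbp.surjOn hz
        exact ⟨Sum.inl x₀, hx₀, rfl⟩
      | inr t =>
        obtain ⟨t₀, ht₀, rfl⟩ := hbt.surjOn hz
        exact ⟨Sum.inr t₀, ht₀, rfl⟩
    obtain ⟨z₀, hz₀, rfl⟩ := this
    obtain ⟨w₀, hw₀, hwe, hc⟩ := iso_causal_back hbp hbt hflow hdst hdts h z₀ hz₀ rfl
    have : z₀ = w₀ := FFm_inj hbp.injOn hbt.injOn hz₀ hw₀ hwe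
    subst this
    exact hP.acyclic z₀ hc
  · -- finite_past
    intro u hu
    obtain ⟨u₀, hu₀, rfl⟩ := hbt.surjOn hu
    have hsub : {t : N.Amb | Q.causal (Sum.inr t) (Sum.inr (ft u₀))} ⊆
        ft '' {t₀ | P.causal (Sum.inr t₀) (Sum.inr u₀)} := by
      intro t ht
      have htQ : t ∈ Q.tr := by
        rcases (Relation.TransGen.head'_iff.mp ht) with ⟨y, hzy, _⟩
        obtain ⟨x, rfl, hx⟩ := rel_from_inr hzy
        exact (hdts t x hx).2
      obtain ⟨t₀, ht₀, rfl⟩ := hbt.surjOn htQ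
      obtain ⟨w₀, hw₀, hwe, hc⟩ :=
        iso_causal_back hbp hbt hflow hdst hdts ht (Sum.inr t₀) ht₀ rfl
      have : (Sum.inr u₀ : N.Amb ⊕ N.Amb) = w₀ :=
        FFm_inj hbp.injOn hbt.injOn hu₀ hw₀ hwe
      subst this
      exact ⟨t₀, hc, rfl⟩
    exact Set.Finite.subset (Set.Finite.image _ (hP.finite_past u₀ hu₀)) hsub
  · -- init_fin
    intro s
    rw [hinitset s]
    exact Set.Finite.image _ (hP.init_fin s)
  · -- init_marking
    intro s
    rw [hinitset s, hP.init_marking s]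
    have hsubpl : {y | y ∈ P.init ∧ P.piS y = s} ⊆ P.pl := fun y hy => hy.1.1
    rw [Set.ncard_image_of_injOn (hbp.injOn.mono hsubpl)]
  · -- pre_fin
    intro t ht
    obtain ⟨t₀, ht₀, rfl⟩ := hbt.surjOn ht
    have : {x : N.Amb | 0 < Q.Fst x (ft t₀)} ⊆ fp '' {x | 0 < P.Fst x t₀} := by
      intro x hx
      obtain ⟨hxQ, _⟩ := hdst x (ft t₀) hx
      obtain ⟨x₀, hx₀, rfl⟩ := hbp.surjOn hxQ
      refine ⟨x₀, ?_, rfl⟩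
      show 0 < P.Fst x₀ t₀
      rw [← (hflow x₀ hx₀ t₀ ht₀).1]; exact hx
    exact Set.Finite.subset (Set.Finite.image _ (hP.pre_fin t₀ ht₀)) this
  · -- post_fin
    intro t ht
    obtain ⟨t₀, ht₀, rfl⟩ := hbt.surjOn ht
    have : {x : N.Amb | 0 < Q.Fts (ft t₀) x} ⊆ fp '' {x | 0 < P.Fts t₀ x} := by
      intro x hx
      obtain ⟨hxQ, _⟩ := hdts (ft t₀) x hx
      obtain ⟨x₀, hx₀, rfl⟩ := hbp.surjOn hxQ
      refine ⟨x₀, ?_, rfl⟩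
      show 0 < P.Fts t₀ x₀
      rw [← (hflow x₀ hx₀ t₀ ht₀).2]; exact hx
    exact Set.Finite.subset (Set.Finite.image _ (hP.post_fin t₀ ht₀)) this
  · -- pre_match
    intro t ht s
    obtain ⟨t₀, ht₀, rfl⟩ := hbt.surjOn ht
    rw [hpiT t₀ ht₀]
    have e1 : ∑ᶠ x ∈ {x | Q.piS x = s}, Q.Fst x (ft t₀)
        = ∑ᶠ x ∈ fp '' {y | y ∈ P.pl ∧ P.piS y = s}, Q.Fst x (ft t₀) := by
      apply finsum_mem_inter_support_eq'
      intro x hx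
      have hpos : 0 < Q.Fst x (ft t₀) := Nat.pos_of_ne_zero hx
      obtain ⟨hxQ, _⟩ := hdst x (ft t₀) hpos
      obtain ⟨y, hy, rfl⟩ := hbp.surjOn hxQ
      simp only [Set.mem_setOf_eq]
      constructor
      · intro hps
        exact ⟨y, ⟨hy, by rw [← hpiS y hy]; exact hps⟩, rfl⟩
      · rintro ⟨y', ⟨hy', hys'⟩, he⟩
        rw [← he, hpiS y' hy']
        exact hys'
    have e2 : ∑ᶠ x ∈ fp '' {y | y ∈ P.pl ∧ P.piS y = s}, Q.Fst x (ft t₀)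
        = ∑ᶠ y ∈ {y | y ∈ P.pl ∧ P.piS y = s}, Q.Fst (fp y) (ft t₀) :=
      finsum_mem_image (hbp.injOn.mono (fun y hy => hy.1))
    have e3 : ∑ᶠ y ∈ {y | y ∈ P.pl ∧ P.piS y = s}, Q.Fst (fp y) (ft t₀)
        = ∑ᶠ y ∈ {y | y ∈ P.pl ∧ P.piS y = s}, P.Fst y t₀ :=
      finsum_mem_congr rfl (fun y hy => (hflow y hy.1 t₀ ht₀).1)
    have e4 : ∑ᶠ y ∈ {y | y ∈ P.pl ∧ P.piS y = s}, P.Fst y t₀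
        = ∑ᶠ y ∈ {y | P.piS y = s}, P.Fst y t₀ := by
      apply finsum_mem_inter_support_eq'
      intro y hy
      have hpos : 0 < P.Fst y t₀ := Nat.pos_of_ne_zero hy
      have := (hP.fst_dom y t₀ hpos).1
      simp only [Set.mem_setOf_eq]
      exact ⟨fun h => h.2, fun h => ⟨this, h⟩⟩
    rw [e1, e2, e3, e4]
    exact hP.pre_match t₀ ht₀ s
  · -- post_match
    intro t ht s
    obtain ⟨t₀, ht₀, rfl⟩ := hbt.surjOn ht
    rw [hpiT t₀ ht₀]
    have e1 : ∑ᶠ x ∈ {x | Q.piS x = s}, Q.Fts (ft t₀) x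
        = ∑ᶠ x ∈ fp '' {y | y ∈ P.pl ∧ P.piS y = s}, Q.Fts (ft t₀) x := by
      apply finsum_mem_inter_support_eq'
      intro x hx
      have hpos : 0 < Q.Fts (ft t₀) x := Nat.pos_of_ne_zero hx
      obtain ⟨hxQ, _⟩ := hdts (ft t₀) x hpos
      obtain ⟨y, hy, rfl⟩ := hbp.surjOn hxQ
      simp only [Set.mem_setOf_eq]
      constructor
      · intro hps
        exact ⟨y, ⟨hy, by rw [← hpiS y hy]; exact hps⟩, rfl⟩
      · rintro ⟨y', ⟨hy', hys'⟩, he⟩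
        rw [← he, hpiS y' hy']
        exact hys'
    have e2 : ∑ᶠ x ∈ fp '' {y | y ∈ P.pl ∧ P.piS y = s}, Q.Fts (ft t₀) x
        = ∑ᶠ y ∈ {y | y ∈ P.pl ∧ P.piS y = s}, Q.Fts (ft t₀) (fp y) :=
      finsum_mem_image (hbp.injOn.mono (fun y hy => hy.1))
    have e3 : ∑ᶠ y ∈ {y | y ∈ P.pl ∧ P.piS y = s}, Q.Fts (ft t₀) (fp y)
        = ∑ᶠ y ∈ {y | y ∈ P.pl ∧ P.piS y = s}, P.Fts t₀ y :=
      finsum_mem_congr rfl (fun y hy => (hflow y hy.1 t₀ ht₀).2)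
    have e4 : ∑ᶠ y ∈ {y | y ∈ P.pl ∧ P.piS y = s}, P.Fts t₀ y
        = ∑ᶠ y ∈ {y | P.piS y = s}, P.Fts t₀ y := by
      apply finsum_mem_inter_support_eq'
      intro y hy
      have hpos : 0 < P.Fts t₀ y := Nat.pos_of_ne_zero hy
      have := (hP.fts_dom t₀ y hpos).1
      simp only [Set.mem_setOf_eq]
      exact ⟨fun h => h.2, fun h => ⟨this, h⟩⟩
    rw [e1, e2, e3, e4]
    exact hP.post_match t₀ ht₀ s
  · -- Iso
    refine ⟨fp, ft, hbp, hbt, hflow, ?_, hpiS, hpiT⟩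
    intro x hx
    rw [hinit]
    constructor
    · intro h; exact ⟨x, h, rfl⟩
    · rintro ⟨y, ⟨hy1, hy2⟩, he⟩
      have : y = x := hbp.injOn hy1 hx he
      subst this; exact ⟨hy1, hy2⟩

end Aux4
section Aux5
open Sum RawProc Set Cardinal
variable {N : Net}

lemma pl_diff_init_finite {P : RawProc N} (hP : IsProc N P) (hf : P.FiniteP) :
    (P.pl \ P.init).Finite := by
  have hsub : P.pl \ P.init ⊆ ⋃ t ∈ P.tr, {x | 0 < P.Fts t x} := by
    intro x hx
    have : ¬ ∀ t, P.Fts t x = 0 := fun hall => hx.2 ⟨hx.1, hall⟩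
    push_neg at this
    obtain ⟨t, ht⟩ := this
    have hpos : 0 < P.Fts t x := Nat.pos_of_ne_zero ht
    exact Set.mem_biUnion (hP.fts_dom t x hpos).2 hpos
  exact Set.Finite.subset (Set.Finite.biUnion hf (fun t ht => hP.post_fin t ht)) hsub

lemma prefix_pl_diff_finite {V W : RawProc N} (hW : IsProc N W)
    (h : ProcPrefix N V W) (hf : W.FiniteP) : (W.pl \ V.pl).Finite := by
  apply Set.Finite.subset (pl_diff_init_finite hW hf)
  intro x hx
  refine ⟨hx.1, fun hxi => hx.2 ?_⟩
  rw [← h.2.2.2.2.2] at hxi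
  exact hxi.1

lemma amb_infinite : Infinite N.Amb := by
  show Infinite (Set (N.S ⊕ N.T ⊕ ℕ))
  infer_instance

lemma small_compl_infinite {U : RawProc N} (hU : IsProc N U) (hf : U.FiniteP) :
    ((U.pl ∪ U.tr)ᶜ).Infinite := by
  have hκ : (ℵ₀ : Cardinal) ≤ #(N.S ⊕ N.T ⊕ ℕ) := Cardinal.aleph0_le_mk _
  have hAmb : #N.Amb = 2 ^ #(N.S ⊕ N.T ⊕ ℕ) := Cardinal.mk_set
  -- bound the initial places
  have hinit : #(U.init) ≤ #(N.S) * ℵ₀ := by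
    have hcov : U.init ⊆ ⋃ s : N.S, {x | x ∈ U.init ∧ U.piS x = s} := by
      intro x hx; exact Set.mem_iUnion.mpr ⟨U.piS x, hx, rfl⟩
    calc #(U.init) ≤ #(⋃ s : N.S, {x | x ∈ U.init ∧ U.piS x = s}) := Cardinal.mk_le_mk_of_subset hcov
    _ ≤ #(N.S) * ⨆ s : N.S, #({x | x ∈ U.init ∧ U.piS x = s}) := Cardinal.mk_iUnion_le _
    _ ≤ #(N.S) * ℵ₀ := by
        apply mul_le_mul_right
        apply ciSup_le'
        intro s
        exact le_of_lt (Set.Finite.lt_aleph0 (hU.init_fin s))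
  set κ := #(N.S ⊕ N.T ⊕ ℕ) with hκdef
  have hS : #(N.S) ≤ κ := Cardinal.mk_le_of_injective (f := Sum.inl) Sum.inl_injective
  have hAmbbig : (ℵ₀ : Cardinal) ≤ #N.Amb := by
    rw [hAmb]; exact hκ.trans (Cardinal.cantor κ).le
  have hplb : #(U.pl) ≤ #(U.init) + #((U.pl \ U.init : Set N.Amb)) := by
    calc #(U.pl) ≤ #((U.init ∪ (U.pl \ U.init) : Set N.Amb)) := by
          apply Cardinal.mk_le_mk_of_subset
          intro x hx
          by_cases h : x ∈ U.init
          · exact Or.inl h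
          · exact Or.inr ⟨hx, h⟩
    _ ≤ _ := Cardinal.mk_union_le _ _
  have hdiff : #((U.pl \ U.init : Set N.Amb)) ≤ ℵ₀ :=
    (Set.Finite.lt_aleph0 (pl_diff_init_finite hU hf)).le
  have htr : #(U.tr) ≤ ℵ₀ := (Set.Finite.lt_aleph0 hf).le
  have htot : #((U.pl ∪ U.tr : Set N.Amb)) < #N.Amb := by
    have h1 : #((U.pl ∪ U.tr : Set N.Amb)) ≤ #(U.pl) + #(U.tr) := Cardinal.mk_union_le _ _
    have h2 : #(U.pl) + #(U.tr) ≤ ((#(N.S) * ℵ₀ + ℵ₀) + ℵ₀) := by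
      apply add_le_add _ htr
      exact le_trans hplb (add_le_add hinit hdiff)
    have hκlt : κ < #N.Amb := by rw [hAmb]; exact Cardinal.cantor κ
    have h3 : (#(N.S) * ℵ₀ + ℵ₀) + ℵ₀ < #N.Amb := by
      apply Cardinal.add_lt_of_lt hAmbbig
      apply Cardinal.add_lt_of_lt hAmbbig
      · calc #(N.S) * ℵ₀ ≤ κ * κ := mul_le_mul' hS hκ
        _ = κ := Cardinal.mul_eq_self hκ
        _ < _ := hκlt
      · exact lt_of_lt_of_le (lt_of_le_of_lt hκ hκlt) le_rfl
      · exact lt_of_le_of_lt hκ hκlt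
    exact lt_of_le_of_lt (le_trans h1 h2) h3
  by_contra hcon
  rw [Set.not_infinite] at hcon
  have := Cardinal.mk_sum_compl (U.pl ∪ U.tr : Set N.Amb)
  have hcompl : #(((U.pl ∪ U.tr)ᶜ : Set N.Amb)) < #N.Amb :=
    lt_of_lt_of_le (Set.Finite.lt_aleph0 hcon) hAmbbig
  have hfin : #N.Amb < #N.Amb := by
    calc #N.Amb = #((U.pl ∪ U.tr : Set N.Amb)) + #(((U.pl ∪ U.tr)ᶜ : Set N.Amb)) := this.symm
    _ < #N.Amb := Cardinal.add_lt_of_lt hAmbbig htot hcompl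
  exact lt_irrefl _ hfin

lemma exists_fresh (D A : Set N.Amb) (hD : D.Finite) (hA : (Aᶜ).Infinite) :
    ∃ m : N.Amb → N.Amb, Set.InjOn m D ∧ ∀ x ∈ D, m x ∉ A := by
  classical
  obtain ⟨g, hg⟩ := Set.countable_iff_exists_injective.mp hD.countable
  let e := hA.natEmbedding
  refine ⟨fun x => if h : x ∈ D then (e (g ⟨x, h⟩)).1 else x, ?_, ?_⟩
  · intro x hx y hy hxy
    simp only [dif_pos hx, dif_pos hy] at hxy
    have : e (g ⟨x, hx⟩) = e (g ⟨y, hy⟩) := Subtype.ext hxy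
    have := hg (e.injective this)
    exact congrArg Subtype.val this
  · intro x hx
    simp only [dif_pos hx]
    exact (e (g ⟨x, hx⟩)).2

end Aux5
section Aux6
open Sum RawProc Set
variable {N : Net}

lemma core_step {U V W : RawProc N} (hUV : OneSwap N U V) (hVW : ProcPrefix N V W)
    (hW : IsProc N W) (hfW : W.FiniteP) (hfU : U.FiniteP) :
    ∃ Z, IsProc N Z ∧ Z.FiniteP ∧ ProcPrefix N U Z ∧ OneSwap N Z W := by
  classical
  haveI : Infinite N.Amb := amb_infinite
  obtain ⟨hU, hV, p, q, hsw, fp, ft, hbp, hbt, hflow, hinitiso, hpiSiso, hpiTiso⟩ := hUV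
  rw [swap_pl] at hbp
  rw [swap_tr] at hbt
  have hpU : p ∈ U.pl := hsw.1
  have hqU : q ∈ U.pl := hsw.2.1
  set p' := fp p with hp'def
  set q' := fp q with hq'def
  have hp'V : p' ∈ V.pl := hbp.mapsTo hpU
  have hq'V : q' ∈ V.pl := hbp.mapsTo hqU
  have hswsw : Swappable (U.swap p q) p q := swappable_swap hU.acyclic hsw
  -- flow of the iso, restated over U
  have hflowU : ∀ x ∈ U.pl, ∀ t ∈ U.tr,
      V.Fst (fp x) (ft t) = (U.swap p q).Fst x t ∧ V.Fts (ft t) (fp x) = U.Fts t x := by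
    intro x hx t ht
    exact hflow x hx t ht
  -- Swappable V p' q'
  have hVpiSp : V.piS p' = U.piS p := hpiSiso p hpU
  have hVpiSq : V.piS q' = U.piS q := hpiSiso q hqU
  have hswV : Swappable V p' q' := by
    refine ⟨hp'V, hq'V, by rw [hVpiSp, hVpiSq]; exact hsw.2.2.1, ?_, ?_⟩
    · intro h
      obtain ⟨w₀, hw₀, hwe, hc⟩ := iso_causal_back (P := U.swap p q) (Q := V)
        hbp hbt hflow hV.fst_dom hV.fts_dom h (Sum.inl p) hpU rfl
      cases w₀ with
      | inl y =>
        have : fp y = q' := by simpa [FFm] using hwe.symm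
        have hy : y = q := hbp.injOn hw₀ hqU this
        subst hy
        exact hswsw.2.2.2.1 hc
      | inr t => simp [FFm] at hwe
    · intro h
      obtain ⟨w₀, hw₀, hwe, hc⟩ := iso_causal_back (P := U.swap p q) (Q := V)
        hbp hbt hflow hV.fst_dom hV.fts_dom h (Sum.inl q) hqU rfl
      cases w₀ with
      | inl y =>
        have : fp y = p' := by simpa [FFm] using hwe.symm
        have hy : y = p := hbp.injOn hw₀ hpU this
        subst hy
        exact hswsw.2.2.2.2 hc
      | inr t => simp [FFm] at hwe
  -- Swappable W p' q'
  have hswW : Swappable W p' q' := by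
    refine ⟨hVW.1 hp'V, hVW.1 hq'V, ?_, ?_, ?_⟩
    · rw [← hVW.2.2.2.1 p' hp'V, ← hVW.2.2.2.1 q' hq'V]
      exact hswV.2.2.1
    · intro h
      exact hswV.2.2.2.1 (prefix_causal_closed hV hW hVW h hq'V).2
    · intro h
      exact hswV.2.2.2.2 (prefix_causal_closed hV hW hVW h hp'V).2
  set W' := W.swap p' q' with hW'def
  have hW' : IsProc N W' := isProc_swap hW hswW
  have hswW' : Swappable W' p' q' := swappable_swap hW.acyclic hswW
  have hfW' : W'.FiniteP := hfW
  have hpre' : ProcPrefix N (V.swap p' q') W' := swap_procPrefix hVW hp'V hq'V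
  -- flow from U into V.swap p' q'
  have hflowUV' : ∀ x ∈ U.pl, ∀ t ∈ U.tr,
      (V.swap p' q').Fst (fp x) (ft t) = U.Fst x t ∧
      (V.swap p' q').Fts (ft t) (fp x) = U.Fts t x := by
    intro x hx t ht
    constructor
    · rw [swap_Fst]
      rcases eq_or_ne x p with rfl | h1
      · rw [show tsw p' q' (fp x) = fp q from by rw [← hp'def, tsw_p]]
        rw [(hflowU q hqU t ht).1, swap_Fst, tsw_q]
      · rcases eq_or_ne x q with rfl | h2
        · rw [show tsw p' q' (fp x) = fp p from by rw [← hq'def, tsw_q]]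
          rw [(hflowU p hpU t ht).1, swap_Fst, tsw_p]
        · have hne1 : fp x ≠ p' := fun h => h1 (hbp.injOn hx hpU h)
          have hne2 : fp x ≠ q' := fun h => h2 (hbp.injOn hx hqU h)
          rw [tsw_other hne1 hne2, (hflowU x hx t ht).1, swap_Fst, tsw_other h1 h2]
    · show V.Fts (ft t) (fp x) = U.Fts t x
      exact (hflowU x hx t ht).2
  -- fresh renaming
  have hDpl : (W.pl \ V.pl).Finite := prefix_pl_diff_finite hW hVW hfW
  have hDtr : (W.tr \ V.tr).Finite := hfW.subset diff_subset
  obtain ⟨m, hmInj, hmFresh⟩ := exists_fresh ((W.pl \ V.pl) ∪ (W.tr \ V.tr)) (U.pl ∪ U.tr)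
    (hDpl.union hDtr) (small_compl_infinite hU hfU)
  have hmplF : ∀ x ∈ W.pl \ V.pl, m x ∉ U.pl := by
    intro x hx h
    exact hmFresh x (Or.inl hx) (Or.inl h)
  have hmtrF : ∀ t ∈ W.tr \ V.tr, m t ∉ U.tr := by
    intro t ht h
    exact hmFresh t (Or.inr ht) (Or.inr h)
  set Zpl := U.pl ∪ m '' (W.pl \ V.pl) with hZpldef
  set Ztr := U.tr ∪ m '' (W.tr \ V.tr) with hZtrdef
  set θp : N.Amb → N.Amb :=
    fun x => if x ∈ U.pl then fp x else Function.invFunOn m (W.pl \ V.pl) x with hθpdef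
  set θt : N.Amb → N.Amb :=
    fun t => if t ∈ U.tr then ft t else Function.invFunOn m (W.tr \ V.tr) t with hθtdef
  set gp : N.Amb → N.Amb :=
    fun x => if x ∈ V.pl then Function.invFunOn fp U.pl x else m x with hgpdef
  set gt : N.Amb → N.Amb :=
    fun t => if t ∈ V.tr then Function.invFunOn ft U.tr t else m t with hgtdef
  set Z : RawProc N :=
    ⟨Zpl, Ztr,
      fun x t => if x ∈ Zpl ∧ t ∈ Ztr then W'.Fst (θp x) (θt t) else 0,
      fun t x => if x ∈ Zpl ∧ t ∈ Ztr then W'.Fts (θt t) (θp x) else 0,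
      fun x => if x ∈ Zpl then W'.piS (θp x) else W.piS x,
      fun t => if t ∈ Ztr then W'.piT (θt t) else W.piT t⟩ with hZdef
  -- basic inverse facts
  have hgpfp : ∀ x ∈ U.pl, gp (fp x) = x := by
    intro x hx
    rw [hgpdef]
    simp only []
    rw [if_pos (hbp.mapsTo hx)]
    exact hbp.injOn.leftInvOn_invFunOn hx
  have hgtft : ∀ t ∈ U.tr, gt (ft t) = t := by
    intro t ht
    rw [hgtdef]
    simp only []
    rw [if_pos (hbt.mapsTo ht)]
    exact hbt.injOn.leftInvOn_invFunOn ht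
  have hgpV : ∀ y ∈ V.pl, gp y ∈ U.pl ∧ fp (gp y) = y := by
    intro y hy
    obtain ⟨x, hx, rfl⟩ := hbp.surjOn hy
    rw [hgpfp x hx]
    exact ⟨hx, rfl⟩
  have hgtV : ∀ u ∈ V.tr, gt u ∈ U.tr ∧ ft (gt u) = u := by
    intro u hu
    obtain ⟨t, ht, rfl⟩ := hbt.surjOn hu
    rw [hgtft t ht]
    exact ⟨ht, rfl⟩
  have hmInjPl : Set.InjOn m (W.pl \ V.pl) := hmInj.mono subset_union_left
  have hmInjTr : Set.InjOn m (W.tr \ V.tr) := hmInj.mono subset_union_right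
  have hθpm : ∀ x ∈ W.pl \ V.pl, θp (m x) = x := by
    intro x hx
    rw [hθpdef]
    simp only []
    rw [if_neg (hmplF x hx)]
    exact hmInjPl.leftInvOn_invFunOn hx
  have hθtm : ∀ t ∈ W.tr \ V.tr, θt (m t) = t := by
    intro t ht
    rw [hθtdef]
    simp only []
    rw [if_neg (hmtrF t ht)]
    exact hmInjTr.leftInvOn_invFunOn ht
  have hθpU : ∀ x ∈ U.pl, θp x = fp x := by
    intro x hx; rw [hθpdef]; simp only []; rw [if_pos hx]
  have hθtU : ∀ t ∈ U.tr, θt t = ft t := by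
    intro t ht; rw [hθtdef]; simp only []; rw [if_pos ht]
  have hθpgp : ∀ x ∈ W.pl, θp (gp x) = x := by
    intro x hx
    by_cases hxV : x ∈ V.pl
    · have ⟨h1, h2⟩ := hgpV x hxV
      rw [hθpU _ h1, h2]
    · have hxD : x ∈ W.pl \ V.pl := ⟨hx, hxV⟩
      have : gp x = m x := by rw [hgpdef]; simp only []; rw [if_neg hxV]
      rw [this]
      exact hθpm x hxD
  have hθtgt : ∀ t ∈ W.tr, θt (gt t) = t := by
    intro t ht
    by_cases htV : t ∈ V.tr
    · have ⟨h1, h2⟩ := hgtV t htV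
      rw [hθtU _ h1, h2]
    · have htD : t ∈ W.tr \ V.tr := ⟨ht, htV⟩
      have : gt t = m t := by rw [hgtdef]; simp only []; rw [if_neg htV]
      rw [this]
      exact hθtm t htD
  -- bijections
  have hbgp : Set.BijOn gp W.pl Zpl := by
    refine ⟨?_, ?_, ?_⟩
    · intro x hx
      by_cases hxV : x ∈ V.pl
      · exact Or.inl (hgpV x hxV).1
      · have : gp x = m x := by rw [hgpdef]; simp only []; rw [if_neg hxV]
        rw [this]
        exact Or.inr ⟨x, ⟨hx, hxV⟩, rfl⟩
    · intro x hx y hy hxy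
      by_cases hxV : x ∈ V.pl <;> by_cases hyV : y ∈ V.pl
      · have := congrArg fp hxy
        rw [(hgpV x hxV).2, (hgpV y hyV).2] at this
        exact this
      · exfalso
        have h1 : gp x ∈ U.pl := (hgpV x hxV).1
        have h2 : gp y = m y := by rw [hgpdef]; simp only []; rw [if_neg hyV]
        rw [hxy, h2] at h1
        exact hmplF y ⟨hy, hyV⟩ h1
      · exfalso
        have h1 : gp y ∈ U.pl := (hgpV y hyV).1
        have h2 : gp x = m x := by rw [hgpdef]; simp only []; rw [if_neg hxV]
        rw [← hxy, h2] at h1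
        exact hmplF x ⟨hx, hxV⟩ h1
      · have h1 : gp x = m x := by rw [hgpdef]; simp only []; rw [if_neg hxV]
        have h2 : gp y = m y := by rw [hgpdef]; simp only []; rw [if_neg hyV]
        rw [h1, h2] at hxy
        exact hmInjPl ⟨hx, hxV⟩ ⟨hy, hyV⟩ hxy
    · intro z hz
      rcases hz with hz | ⟨x, hx, rfl⟩
      · exact ⟨fp z, hVW.1 (hbp.mapsTo hz), hgpfp z hz⟩
      · refine ⟨x, hx.1, ?_⟩
        rw [hgpdef]; simp only []; rw [if_neg hx.2]
  have hbgt : Set.BijOn gt W.tr Ztr := by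
    refine ⟨?_, ?_, ?_⟩
    · intro t ht
      by_cases htV : t ∈ V.tr
      · exact Or.inl (hgtV t htV).1
      · have : gt t = m t := by rw [hgtdef]; simp only []; rw [if_neg htV]
        rw [this]
        exact Or.inr ⟨t, ⟨ht, htV⟩, rfl⟩
    · intro x hx y hy hxy
      by_cases hxV : x ∈ V.tr <;> by_cases hyV : y ∈ V.tr
      · have := congrArg ft hxy
        rw [(hgtV x hxV).2, (hgtV y hyV).2] at this
        exact this
      · exfalso
        have h1 : gt x ∈ U.tr := (hgtV x hxV).1
        have h2 : gt y = m y := by rw [hgtdef]; simp only []; rw [if_neg hyV]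
        rw [hxy, h2] at h1
        exact hmtrF y ⟨hy, hyV⟩ h1
      · exfalso
        have h1 : gt y ∈ U.tr := (hgtV y hyV).1
        have h2 : gt x = m x := by rw [hgtdef]; simp only []; rw [if_neg hxV]
        rw [← hxy, h2] at h1
        exact hmtrF x ⟨hx, hxV⟩ h1
      · have h1 : gt x = m x := by rw [hgtdef]; simp only []; rw [if_neg hxV]
        have h2 : gt y = m y := by rw [hgtdef]; simp only []; rw [if_neg hyV]
        rw [h1, h2] at hxy
        exact hmInjTr ⟨hx, hxV⟩ ⟨hy, hyV⟩ hxy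
    · intro z hz
      rcases hz with hz | ⟨t, ht, rfl⟩
      · exact ⟨ft z, hVW.2.1 (hbt.mapsTo hz), hgtft z hz⟩
      · refine ⟨t, ht.1, ?_⟩
        rw [hgtdef]; simp only []; rw [if_neg ht.2]
  -- transport hypotheses
  have hflowZ : ∀ x ∈ W'.pl, ∀ t ∈ W'.tr,
      Z.Fst (gp x) (gt t) = W'.Fst x t ∧ Z.Fts (gt t) (gp x) = W'.Fts t x := by
    intro x hx t ht
    have hx' : x ∈ W.pl := hx
    have ht' : t ∈ W.tr := ht
    have hgpZ : gp x ∈ Zpl := hbgp.mapsTo hx'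
    have hgtZ : gt t ∈ Ztr := hbgt.mapsTo ht'
    constructor
    · show (if gp x ∈ Zpl ∧ gt t ∈ Ztr then W'.Fst (θp (gp x)) (θt (gt t)) else 0) = W'.Fst x t
      rw [if_pos ⟨hgpZ, hgtZ⟩, hθpgp x hx', hθtgt t ht']
    · show (if gp x ∈ Zpl ∧ gt t ∈ Ztr then W'.Fts (θt (gt t)) (θp (gp x)) else 0) = W'.Fts t x
      rw [if_pos ⟨hgpZ, hgtZ⟩, hθpgp x hx', hθtgt t ht']
  have hpiSZ : ∀ x ∈ W'.pl, Z.piS (gp x) = W'.piS x := by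
    intro x hx
    show (if gp x ∈ Zpl then W'.piS (θp (gp x)) else W.piS (gp x)) = W'.piS x
    rw [if_pos (hbgp.mapsTo hx), hθpgp x hx]
  have hpiTZ : ∀ t ∈ W'.tr, Z.piT (gt t) = W'.piT t := by
    intro t ht
    show (if gt t ∈ Ztr then W'.piT (θt (gt t)) else W.piT (gt t)) = W'.piT t
    rw [if_pos (hbgt.mapsTo ht), hθtgt t ht]
  have h0st : ∀ x t, ¬(x ∈ Z.pl ∧ t ∈ Z.tr) → Z.Fst x t = 0 := by
    intro x t h
    show (if x ∈ Zpl ∧ t ∈ Ztr then W'.Fst (θp x) (θt t) else 0) = 0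
    rw [if_neg h]
  have h0ts : ∀ t x, ¬(x ∈ Z.pl ∧ t ∈ Z.tr) → Z.Fts t x = 0 := by
    intro t x h
    show (if x ∈ Zpl ∧ t ∈ Ztr then W'.Fts (θt t) (θp x) else 0) = 0
    rw [if_neg h]
  obtain ⟨hZproc, hZinit, hZiso⟩ :=
    isProc_transport (P := W') (Q := Z) hW' (fp := gp) (ft := gt) hbgp hbgt hflowZ
      hpiSZ hpiTZ h0st h0ts
  have hfZ : Z.FiniteP := hfU.union (Set.Finite.image _ hDtr)
  -- ProcPrefix U Z
  have hUZflow : ∀ x ∈ U.pl, ∀ t ∈ U.tr, U.Fst x t = Z.Fst x t ∧ U.Fts t x = Z.Fts t x := by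
    intro x hx t ht
    have hxZ : x ∈ Zpl := Or.inl hx
    have htZ : t ∈ Ztr := Or.inl ht
    have hfpV : fp x ∈ V.pl := hbp.mapsTo hx
    have hftV : ft t ∈ V.tr := hbt.mapsTo ht
    have hpre'flow := hpre'.2.2.1 (fp x) hfpV (ft t) hftV
    constructor
    · show U.Fst x t = (if x ∈ Zpl ∧ t ∈ Ztr then W'.Fst (θp x) (θt t) else 0)
      rw [if_pos ⟨hxZ, htZ⟩, hθpU x hx, hθtU t ht, ← hpre'flow.1,
        (hflowUV' x hx t ht).1]
    · show U.Fts t x = (if x ∈ Zpl ∧ t ∈ Ztr then W'.Fts (θt t) (θp x) else 0)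
      rw [if_pos ⟨hxZ, htZ⟩, hθpU x hx, hθtU t ht, ← hpre'flow.2,
        (hflowUV' x hx t ht).2]
  have hUZpiS : ∀ x ∈ U.pl, U.piS x = Z.piS x := by
    intro x hx
    have hxZ : x ∈ Zpl := Or.inl hx
    have hfpV : fp x ∈ V.pl := hbp.mapsTo hx
    show U.piS x = (if x ∈ Zpl then W'.piS (θp x) else W.piS x)
    rw [if_pos hxZ, hθpU x hx]
    show U.piS x = W.piS (fp x)
    rw [← hVW.2.2.2.1 (fp x) hfpV, hpiSiso x hx]
    rfl
  have hUZpiT : ∀ t ∈ U.tr, U.piT t = Z.piT t := by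
    intro t ht
    have htZ : t ∈ Ztr := Or.inl ht
    have hftV : ft t ∈ V.tr := hbt.mapsTo ht
    show U.piT t = (if t ∈ Ztr then W'.piT (θt t) else W.piT t)
    rw [if_pos htZ, hθtU t ht]
    show U.piT t = W.piT (ft t)
    rw [← hVW.2.2.2.2.1 (ft t) hftV, hpiTiso t ht]
    rfl
  have hZinitU : Z.init = U.init := by
    rw [hZinit]
    have hWi : W'.init = V.init := by
      show W.init = V.init
      exact (hVW.2.2.2.2.2).symm
    rw [hWi]
    ext x
    constructor
    · rintro ⟨y, hy, rfl⟩
      have hyV : y ∈ V.pl := hy.1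
      have := (hinitiso (gp y) (hgpV y hyV).1)
      rw [swap_init] at this
      apply this.mpr
      rw [(hgpV y hyV).2]
      exact hy
    · intro hx
      have hxU : x ∈ U.pl := hx.1
      have h1 := (hinitiso x hxU)
      rw [swap_init] at h1
      have h2 : fp x ∈ V.init := h1.mp hx
      exact ⟨fp x, h2, hgpfp x hxU⟩
  have hprefUZ : ProcPrefix N U Z := by
    refine ⟨fun x hx => Or.inl hx, fun t ht => Or.inl ht, hUZflow, hUZpiS, hUZpiT,
      hZinitU.symm⟩
  -- Swappable Z p q
  have hpZ : p ∈ Zpl := Or.inl hpU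
  have hqZ : q ∈ Zpl := Or.inl hqU
  have hgpp' : gp p' = p := hgpfp p hpU
  have hgpq' : gp q' = q := hgpfp q hqU
  have hswZ : Swappable Z p q := by
    refine ⟨hpZ, hqZ, ?_, ?_, ?_⟩
    · rw [← hUZpiS p hpU, ← hUZpiS q hqU]
      exact hsw.2.2.1
    · intro h
      obtain ⟨w₀, hw₀, hwe, hc⟩ := iso_causal_back (P := W') (Q := Z) hbgp hbgt hflowZ
        hZproc.fst_dom hZproc.fts_dom h (Sum.inl p') (hVW.1 hp'V) (by simp [FFm, hgpp'])
      cases w₀ with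
      | inl y =>
        have : gp y = q := by simpa [FFm] using hwe.symm
        have hy : y = q' := hbgp.injOn hw₀ (hVW.1 hq'V) (by rw [this, hgpq'])
        subst hy
        exact hswW'.2.2.2.1 hc
      | inr t => simp [FFm] at hwe
    · intro h
      obtain ⟨w₀, hw₀, hwe, hc⟩ := iso_causal_back (P := W') (Q := Z) hbgp hbgt hflowZ
        hZproc.fst_dom hZproc.fts_dom h (Sum.inl q') (hVW.1 hq'V) (by simp [FFm, hgpq'])
      cases w₀ with
      | inl y =>
        have : gp y = p := by simpa [FFm] using hwe.symm
        have hy : y = p' := hbgp.injOn hw₀ (hVW.1 hp'V) (by rw [this, hgpp'])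
        subst hy
        exact hswW'.2.2.2.2 hc
      | inr t => simp [FFm] at hwe
  -- Iso (Z.swap p q) W via θp θt
  have hθbij_pl : Set.BijOn θp Zpl W.pl := by
    refine ⟨?_, ?_, ?_⟩
    · intro x hx
      rcases hx with hx | ⟨d, hd, rfl⟩
      · rw [hθpU x hx]
        exact hVW.1 (hbp.mapsTo hx)
      · rw [hθpm d hd]
        exact hd.1
    · intro x hx y hy hxy
      rcases hx with hx | ⟨d, hd, rfl⟩ <;> rcases hy with hy | ⟨e, he, rfl⟩
      · rw [hθpU x hx, hθpU y hy] at hxy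
        exact hbp.injOn hx hy hxy
      · exfalso
        rw [hθpU x hx, hθpm e he] at hxy
        exact he.2 (hxy ▸ hbp.mapsTo hx)
      · exfalso
        rw [hθpU y hy, hθpm d hd] at hxy
        exact hd.2 (hxy ▸ (hbp.mapsTo hy))
      · rw [hθpm d hd, hθpm e he] at hxy
        rw [hxy]
    · intro w hw
      by_cases hwV : w ∈ V.pl
      · obtain ⟨x, hx, rfl⟩ := hbp.surjOn hwV
        exact ⟨x, Or.inl hx, hθpU x hx⟩
      · exact ⟨m w, Or.inr ⟨w, ⟨hw, hwV⟩, rfl⟩, hθpm w ⟨hw, hwV⟩⟩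
  have hθbij_tr : Set.BijOn θt Ztr W.tr := by
    refine ⟨?_, ?_, ?_⟩
    · intro t ht
      rcases ht with ht | ⟨d, hd, rfl⟩
      · rw [hθtU t ht]
        exact hVW.2.1 (hbt.mapsTo ht)
      · rw [hθtm d hd]
        exact hd.1
    · intro x hx y hy hxy
      rcases hx with hx | ⟨d, hd, rfl⟩ <;> rcases hy with hy | ⟨e, he, rfl⟩
      · rw [hθtU x hx, hθtU y hy] at hxy
        exact hbt.injOn hx hy hxy
      · exfalso
        rw [hθtU x hx, hθtm e he] at hxy
        exact he.2 (hxy ▸ hbt.mapsTo hx)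
      · exfalso
        rw [hθtU y hy, hθtm d hd] at hxy
        exact hd.2 (hxy ▸ (hbt.mapsTo hy))
      · rw [hθtm d hd, hθtm e he] at hxy
        rw [hxy]
    · intro w hw
      by_cases hwV : w ∈ V.tr
      · obtain ⟨t, ht, rfl⟩ := hbt.surjOn hwV
        exact ⟨t, Or.inl ht, hθtU t ht⟩
      · exact ⟨m w, Or.inr ⟨w, ⟨hw, hwV⟩, rfl⟩, hθtm w ⟨hw, hwV⟩⟩
  have htswZpl : ∀ x ∈ Zpl, tsw p q x ∈ Zpl := by
    intro x hx
    rcases eq_or_ne x p with rfl | h1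
    · rw [tsw_p]; exact hqZ
    · rcases eq_or_ne x q with rfl | h2
      · rw [tsw_q]; exact hpZ
      · rw [tsw_other h1 h2]; exact hx
  have hθtsw : ∀ x ∈ Zpl, tsw p' q' (θp (tsw p q x)) = θp x := by
    intro x hx
    rcases eq_or_ne x p with heq | h1
    · rw [heq, tsw_p, hθpU q hqU, ← hq'def, tsw_q, hp'def, hθpU p hpU]
    · rcases eq_or_ne x q with heq | h2
      · rw [heq, tsw_q, hθpU p hpU, ← hp'def, tsw_p, hq'def, hθpU q hqU]
      · rw [tsw_other h1 h2]
        have hne : θp x ≠ p' ∧ θp x ≠ q' := by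
          rcases hx with hx | ⟨d, hd, rfl⟩
          · rw [hθpU x hx]
            exact ⟨fun h => h1 (hbp.injOn hx hpU h), fun h => h2 (hbp.injOn hx hqU h)⟩
          · rw [hθpm d hd]
            exact ⟨fun h => hd.2 (h ▸ hp'V), fun h => hd.2 (h ▸ hq'V)⟩
        rw [tsw_other hne.1 hne.2]
  have hisoZW : Iso N (Z.swap p q) W := by
    refine ⟨θp, θt, ?_, ?_, ?_, ?_, ?_, ?_⟩
    · rw [swap_pl]; exact hθbij_pl
    · rw [swap_tr]; exact hθbij_tr
    · intro x hx t ht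
      rw [swap_pl] at hx
      rw [swap_tr] at ht
      constructor
      · rw [swap_Fst]
        have htsZ : tsw p q x ∈ Zpl := htswZpl x hx
        show W.Fst (θp x) (θt t) =
          (if tsw p q x ∈ Zpl ∧ t ∈ Ztr then W'.Fst (θp (tsw p q x)) (θt t) else 0)
        rw [if_pos ⟨htsZ, ht⟩]
        show W.Fst (θp x) (θt t) = (W.swap p' q').Fst (θp (tsw p q x)) (θt t)
        rw [swap_Fst, hθtsw x hx]
      · show W.Fts (θt t) (θp x) =
          (if x ∈ Zpl ∧ t ∈ Ztr then W'.Fts (θt t) (θp x) else 0)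
        rw [if_pos ⟨hx, ht⟩]
        rfl
    · intro x hx
      rw [swap_pl] at hx
      rw [swap_init]
      have hZi : Z.init = gp '' W.init := by
        rw [hZinit]; rfl
      rw [hZi]
      constructor
      · rintro ⟨w, hw, rfl⟩
        rw [hθpgp w hw.1]
        exact hw
      · intro h
        refine ⟨θp x, h, ?_⟩
        rcases hx with hx | ⟨d, hd, rfl⟩
        · rw [hθpU x hx]
          exact hgpfp x hx
        · rw [hθpm d hd, hgpdef]
          simp only []
          rw [if_neg hd.2]
    · intro x hx
      rw [swap_pl] at hx
      show W.piS (θp x) = (if x ∈ Zpl then W'.piS (θp x) else W.piS x)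
      rw [if_pos hx]
      rfl
    · intro t ht
      rw [swap_tr] at ht
      show W.piT (θt t) = (if t ∈ Ztr then W'.piT (θt t) else W.piT t)
      rw [if_pos ht]
      rfl
  exact ⟨Z, hZproc, hfZ, hprefUZ, hZproc, hW, p, q, hswZ, hisoZW⟩

end Aux6
section Aux7
open Sum RawProc Set
variable {N : Net}

lemma oneswap_finite {U V : RawProc N} (h : OneSwap N U V) (hf : U.FiniteP) : V.FiniteP := by
  obtain ⟨_, _, p, q, _, fp, ft, _, hbt, _⟩ := h
  have h2 : V.tr = ft '' (U.swap p q).tr := hbt.image_eq.symm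
  show V.tr.Finite
  rw [h2]
  exact hf.image ft

lemma swapEqv_prefix_commute {A B C : RawProc N} (hAB : SwapEqv N A B) (hfA : A.FiniteP)
    (hBC : ProcPrefix N B C) (hC : IsProc N C) (hfC : C.FiniteP) :
    ∃ X, IsProc N X ∧ X.FiniteP ∧ ProcPrefix N A X ∧ SwapEqv N X C := by
  induction hAB using Relation.ReflTransGen.head_induction_on with
  | refl => exact ⟨C, hC, hfC, hBC, Relation.ReflTransGen.refl⟩
  | head h' h IH =>
    rename_i a c
    have hfc : c.FiniteP := oneswap_finite h' hfA
    obtain ⟨X₁, hX₁, hfX₁, hpre₁, heqv₁⟩ := IH hfc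
    obtain ⟨Z, hZ, hfZ, hpreZ, hswZ⟩ := core_step h' hpre₁ hX₁ hfX₁ hfA
    exact ⟨Z, hZ, hfZ, hpreZ, Relation.ReflTransGen.head hswZ heqv₁⟩

end Aux7
/-- `⊑₁^∞` is a preorder on the GR-processes of a net (reflexive and
transitive), and consequently its kernel `≡₁^∞` is an equivalence relation. -/
theorem swapLe_preorder (N : Net) :
    (∀ P : RawProc N, IsProc N P → SwapLe N P P) ∧
    (∀ P Q R : RawProc N, IsProc N P → IsProc N Q → IsProc N R →
      SwapLe N P Q → SwapLe N Q R → SwapLe N P R) ∧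
    Equivalence (fun P Q : {P : RawProc N // IsProc N P} =>
      SwapLe N P.1 Q.1 ∧ SwapLe N Q.1 P.1) := by
  have hrefl : ∀ P : RawProc N, IsProc N P → SwapLe N P P := by
    intro P _ P'' h1 h2 h3
    exact ⟨P'', P'', h1, h2, h1, h2, procPrefix_refl _, Relation.ReflTransGen.refl, h3⟩
  have htrans : ∀ P Q R : RawProc N, IsProc N P → IsProc N Q → IsProc N R →
      SwapLe N P Q → SwapLe N Q R → SwapLe N P R := by
    intro P Q R _ _ _ hPQ hQR P'' hP'' hf'' hpre''
    obtain ⟨P', Q', hP', hfP', hQ', hfQ', h1, h2, h3⟩ := hPQ P'' hP'' hf'' hpre''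
    obtain ⟨Q₂, R', hQ₂, hfQ₂, hR', hfR', h4, h5, h6⟩ := hQR Q' hQ' hfQ' h3
    obtain ⟨X, hX, hfX, h7, h8⟩ := swapEqv_prefix_commute h2 hfP' h4 hQ₂ hfQ₂
    exact ⟨X, R', hX, hfX, hR', hfR', procPrefix_trans h1 h7, h8.trans h5, h6⟩
  refine ⟨hrefl, htrans, ?_, ?_, ?_⟩
  · intro P
    exact ⟨hrefl P.1 P.2, hrefl P.1 P.2⟩
  · intro P Q h
    exact ⟨h.2, h.1⟩
  · intro P Q R h1 h2
    exact ⟨htrans P.1 Q.1 R.1 P.2 Q.2 R.2 h1.1 h2.1,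
      htrans R.1 Q.1 P.1 R.2 Q.2 P.2 h2.2 h1.2⟩
end

section
/- Forward diamond for processes: if P —a→ P' for finite GR-processes of a net N, and the step {a,b} is enabled at the marking ĤP, then there exist processes Q, Q' with P' —b→ Q' and P —b→ Q —a→ Q'. -/
section Helpers

variable {α : Type*}

theorem finsum_mem_ones (s : Set α) (h : s.Finite) : (∑ᶠ x ∈ s, (1:ℕ)) = s.ncard := by
  rw [← Set.Finite.coe_toFinset h, finsum_mem_coe_finset, Finset.sum_const, smul_eq_mul,
    mul_one, Set.ncard_eq_toFinset_card']
  simp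

theorem finsum_mem_indicator (U B : Set α) [DecidablePred (· ∈ B)] (h : (U ∩ B).Finite) :
    (∑ᶠ x ∈ U, (if x ∈ B then (1:ℕ) else 0)) = (U ∩ B).ncard := by
  have hsupp : Function.support (fun x => if x ∈ B then (1:ℕ) else 0) = B := by
    ext x; by_cases hx : x ∈ B <;> simp [hx]
  rw [← finsum_mem_inter_support, hsupp,
    finsum_mem_congr rfl (fun x (hx : x ∈ U ∩ B) => if_pos hx.2), finsum_mem_ones _ h]

theorem le_finsum_mem_nat (U : Set α) (f : α → ℕ) (h : U.Finite) (h1 : ∀ x ∈ U, 1 ≤ f x) :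
    U.ncard ≤ ∑ᶠ x ∈ U, f x := by
  rw [← finsum_mem_ones U h, finsum_mem_eq_finite_toFinset_sum _ h,
    finsum_mem_eq_finite_toFinset_sum _ h]
  exact Finset.sum_le_sum (fun x hx => h1 x (h.mem_toFinset.mp hx))

theorem finsum_mem_mono_nat (f : α → ℕ) (s t : Set α) (hsub : s ⊆ t)
    (hfin : (t ∩ Function.support f).Finite) :
    (∑ᶠ x ∈ s, f x) ≤ ∑ᶠ x ∈ t, f x := by
  rw [← finsum_mem_inter_support f s, ← finsum_mem_inter_support f t]
  have hfin' : (s ∩ Function.support f).Finite :=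
    hfin.subset (Set.inter_subset_inter_left _ hsub)
  rw [finsum_mem_eq_finite_toFinset_sum _ hfin', finsum_mem_eq_finite_toFinset_sum _ hfin]
  apply Finset.sum_le_sum_of_subset
  intro x hx
  rw [Set.Finite.mem_toFinset] at *
  exact ⟨hsub hx.1, hx.2⟩

end Helpers

section Extension

open Classical in
/-- Extend a process `R` by a single new transition `tb` labelled `b`,
with preplaces `B` and fresh postplaces `C`. -/
noncomputable def extProc {N : Net} (R : RawProc N) (tb : N.Amb) (B C : Set N.Amb)
    (pS : N.Amb → N.S) (b : N.T) : RawProc N where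
  pl := R.pl ∪ C
  tr := insert tb R.tr
  Fst := fun x t => if t = tb then (if x ∈ B then 1 else 0) else R.Fst x t
  Fts := fun t x => if t = tb then (if x ∈ C then 1 else 0) else R.Fts t x
  piS := pS
  piT := fun t => if t = tb then b else R.piT t

/-- The data needed for `extProc` to be a legitimate one-transition extension. -/
structure ExtData {N : Net} (R : RawProc N) (tb : N.Amb) (B C : Set N.Amb)
    (pS : N.Amb → N.S) (b : N.T) : Prop where
  tb_tr : tb ∉ R.tr
  tb_C : tb ∉ C
  C_pl : ∀ c ∈ C, c ∉ R.pl
  C_fin : C.Finite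
  B_ends : B ⊆ R.ends
  B_fin : B.Finite
  pS_eq : ∀ x ∈ R.pl, pS x = R.piS x
  B_fib : ∀ s, {x | x ∈ B ∧ R.piS x = s}.ncard = N.pre b s
  C_fib : ∀ s, {x | x ∈ C ∧ pS x = s}.ncard = N.post b s

namespace ExtData

variable {N : Net} {R : RawProc N} {tb : N.Amb} {B C : Set N.Amb} {pS : N.Amb → N.S} {b : N.T}
variable (hR : IsProc N R) (hd : ExtData R tb B C pS b)

open Classical

include hd

theorem B_pl : B ⊆ R.pl := fun x hx => (hd.B_ends hx).1

include hR

/-- In `extProc`, the edges not involving `tb` are exactly the edges of `R`,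
places of `C` have no outgoing edges, and `tb` has only `C`-targets. -/
theorem rel_cases {z w : N.Amb ⊕ N.Amb} (h : (extProc R tb B C pS b).rel z w) :
    R.rel z w ∨ (∃ x, z = Sum.inl x ∧ x ∈ B ∧ w = Sum.inr tb) ∨
      (z = Sum.inr tb ∧ ∃ c ∈ C, w = Sum.inl c) := by
  match z, w with
  | Sum.inl x, Sum.inr t =>
    simp only [RawProc.rel, extProc] at h
    by_cases ht : t = tb
    · subst ht
      rw [if_pos rfl] at h
      by_cases hxB : x ∈ B
      · exact Or.inr (Or.inl ⟨x, rfl, hxB, rfl⟩)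
      · rw [if_neg hxB] at h; exact absurd h (lt_irrefl 0)
    · rw [if_neg ht] at h; exact Or.inl h
  | Sum.inr t, Sum.inl x =>
    simp only [RawProc.rel, extProc] at h
    by_cases ht : t = tb
    · subst ht
      rw [if_pos rfl] at h
      by_cases hxC : x ∈ C
      · exact Or.inr (Or.inr ⟨rfl, x, hxC, rfl⟩)
      · rw [if_neg hxC] at h; exact absurd h (lt_irrefl 0)
    · rw [if_neg ht] at h; exact Or.inl h
  | Sum.inl _, Sum.inl _ => exact h.elim
  | Sum.inr _, Sum.inr _ => exact h.elim

theorem no_out_C {c : N.Amb} (hc : c ∈ C) (w : N.Amb ⊕ N.Amb) :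
    ¬ (extProc R tb B C pS b).rel (Sum.inl c) w := by
  intro h
  rcases rel_cases hR hd h with h0 | ⟨x, hx1, hx2, _⟩ | ⟨h0, _⟩
  · match w, h0 with
    | Sum.inr t, h0 => exact hd.C_pl c hc (hR.fst_dom c t h0).1
  · cases hx1; exact hd.C_pl c hc (B_pl hd hx2)
  · exact absurd h0 (by simp)

theorem no_rel_R_to_tb (z : N.Amb ⊕ N.Amb) : ¬ R.rel z (Sum.inr tb) := by
  intro h
  match z, h with
  | Sum.inl x, h => exact hd.tb_tr (hR.fst_dom x tb h).2

theorem no_rel_R_from_tb (w : N.Amb ⊕ N.Amb) : ¬ R.rel (Sum.inr tb) w := by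
  intro h
  match w, h with
  | Sum.inl x, h => exact hd.tb_tr (hR.fts_dom tb x h).2

theorem no_causal_R_to_tb (z : N.Amb ⊕ N.Amb) : ¬ R.causal z (Sum.inr tb) := by
  intro h
  cases h with
  | single e => exact no_rel_R_to_tb hR hd _ e
  | tail _ e => exact no_rel_R_to_tb hR hd _ e

/-- Classification of causality in the extended process, starting from a
"good" node (not in `C`, not `tb`). -/
theorem causal_cases {z w : N.Amb ⊕ N.Amb}
    (hz : (∀ c ∈ C, z ≠ Sum.inl c) ∧ z ≠ Sum.inr tb)
    (h : (extProc R tb B C pS b).causal z w) :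
    R.causal z w ∨ w = Sum.inr tb ∨ ∃ c ∈ C, w = Sum.inl c := by
  induction h with
  | single e =>
    rcases rel_cases hR hd e with h0 | ⟨x, hx1, _, hw⟩ | ⟨h0, _⟩
    · exact Or.inl (Relation.TransGen.single h0)
    · exact Or.inr (Or.inl hw)
    · exact absurd h0 hz.2
  | tail hzw' e ih =>
    rename_i w' w
    rcases ih with h0 | h0 | ⟨c, hc, h0⟩
    · rcases rel_cases hR hd e with h1 | ⟨x, hx1, _, hw⟩ | ⟨h1, c, hc, hw⟩
      · exact Or.inl (Relation.TransGen.tail h0 h1)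
      · exact Or.inr (Or.inl hw)
      · rw [h1] at h0
        exact absurd h0 (no_causal_R_to_tb hR hd _)
    · rw [h0] at e
      rcases rel_cases hR hd e with h1 | ⟨x, hx1, _, hw⟩ | ⟨_, c, hc, hw⟩
      · exact absurd h1 (no_rel_R_from_tb hR hd _)
      · exact absurd hx1 (by simp)
      · exact Or.inr (Or.inr ⟨c, hc, hw⟩)
    · rw [h0] at e
      exact absurd e (no_out_C hR hd hc _)

theorem B_notC {x : N.Amb} (hx : x ∈ B) : x ∉ C :=
  fun hc => hd.C_pl x hc (B_pl hd hx)

theorem finite_past_place (x : N.Amb) :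
    {t : N.Amb | R.causal (Sum.inr t) (Sum.inl x)}.Finite := by
  have hsub : {t : N.Amb | R.causal (Sum.inr t) (Sum.inl x)} ⊆
      ⋃ u ∈ {u | 0 < R.Fts u x}, insert u {t | R.causal (Sum.inr t) (Sum.inr u)} := by
    intro t ht
    simp only [Set.mem_setOf_eq] at ht
    have : ∃ u, 0 < R.Fts u x ∧ (t = u ∨ R.causal (Sum.inr t) (Sum.inr u)) := by
      cases ht with
      | single e => exact ⟨t, e, Or.inl rfl⟩
      | tail h e =>
        rename_i w'
        match w', e with
        | Sum.inr u, e => exact ⟨u, e, Or.inr h⟩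
    obtain ⟨u, hu1, hu2⟩ := this
    exact Set.mem_biUnion hu1 (by simpa using hu2)
  refine Set.Finite.subset (Set.Finite.biUnion ?_ ?_) hsub
  · exact Set.Subsingleton.finite (fun u hu u' hu' => hR.pre_unique x u u' hu hu')
  · intro u hu
    exact ((hR.finite_past u (hR.fts_dom u x hu).2).insert u)

theorem ext_init : (extProc R tb B C pS b).init = R.init := by
  ext x
  constructor
  · rintro ⟨hx, hfts⟩
    have hxC : x ∉ C := by
      intro hc
      have := hfts tb
      simp only [extProc, if_pos rfl, hc] at this
      exact one_ne_zero this
    have hxpl : x ∈ R.pl := hx.resolve_right hxC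
    refine ⟨hxpl, fun t => ?_⟩
    by_cases ht : t = tb
    · by_contra hne
      exact hd.tb_tr (ht ▸ (hR.fts_dom t x (Nat.pos_of_ne_zero hne)).2)
    · have := hfts t
      simpa only [extProc, if_neg ht] using this
  · rintro ⟨hx, hfts⟩
    refine ⟨Or.inl hx, fun t => ?_⟩
    by_cases ht : t = tb
    · simp only [extProc]
      rw [if_pos ht, if_neg (fun hc => hd.C_pl x hc hx)]
    · simpa only [extProc, if_neg ht] using hfts t

theorem isProc : IsProc N (extProc R tb B C pS b) := by
  have hBpl := B_pl hd
  constructor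
  -- fst_dom
  · intro x t h
    simp only [extProc] at h ⊢
    by_cases ht : t = tb
    · subst ht
      rw [if_pos rfl] at h
      by_cases hx : x ∈ B
      · exact ⟨Or.inl (hBpl hx), Set.mem_insert _ _⟩
      · rw [if_neg hx] at h; exact absurd h (lt_irrefl 0)
    · rw [if_neg ht] at h
      exact ⟨Or.inl (hR.fst_dom x t h).1, Set.mem_insert_of_mem _ (hR.fst_dom x t h).2⟩
  -- fts_dom
  · intro t x h
    simp only [extProc] at h ⊢
    by_cases ht : t = tb
    · subst ht
      rw [if_pos rfl] at h
      by_cases hx : x ∈ C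
      · exact ⟨Or.inr hx, Set.mem_insert _ _⟩
      · rw [if_neg hx] at h; exact absurd h (lt_irrefl 0)
    · rw [if_neg ht] at h
      exact ⟨Or.inl (hR.fts_dom t x h).1, Set.mem_insert_of_mem _ (hR.fts_dom t x h).2⟩
  -- pre_unique
  · intro x t t' h h'
    simp only [extProc] at h h'
    by_cases ht : t = tb <;> by_cases ht' : t' = tb
    · rw [ht, ht']
    · rw [if_pos ht] at h
      rw [if_neg ht'] at h'
      have hx : x ∈ C := by by_contra hx; rw [if_neg hx] at h; exact absurd h (lt_irrefl 0)
      exact absurd (hR.fts_dom t' x h').1 (hd.C_pl x hx)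
    · rw [if_neg ht] at h
      rw [if_pos ht'] at h'
      have hx : x ∈ C := by by_contra hx; rw [if_neg hx] at h'; exact absurd h' (lt_irrefl 0)
      exact absurd (hR.fts_dom t x h).1 (hd.C_pl x hx)
    · rw [if_neg ht] at h
      rw [if_neg ht'] at h'
      exact hR.pre_unique x t t' h h'
  -- pre_le_one
  · intro t x
    simp only [extProc]
    split
    · split <;> omega
    · exact hR.pre_le_one t x
  -- post_unique
  · intro x t t' h h'
    simp only [extProc] at h h'
    by_cases ht : t = tb <;> by_cases ht' : t' = tb
    · rw [ht, ht']
    · rw [if_pos ht] at h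
      rw [if_neg ht'] at h'
      have hx : x ∈ B := by by_contra hx; rw [if_neg hx] at h; exact absurd h (lt_irrefl 0)
      rw [(hd.B_ends hx).2 t'] at h'
      exact absurd h' (lt_irrefl 0)
    · rw [if_neg ht] at h
      rw [if_pos ht'] at h'
      have hx : x ∈ B := by by_contra hx; rw [if_neg hx] at h'; exact absurd h' (lt_irrefl 0)
      rw [(hd.B_ends hx).2 t] at h
      exact absurd h (lt_irrefl 0)
    · rw [if_neg ht] at h
      rw [if_neg ht'] at h'
      exact hR.post_unique x t t' h h'
  -- post_le_one
  · intro x t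
    simp only [extProc]
    split
    · split <;> omega
    · exact hR.post_le_one x t
  -- acyclic
  · intro z hzz
    by_cases hzC : ∃ c ∈ C, z = Sum.inl c
    · obtain ⟨c, hc, rfl⟩ := hzC
      obtain ⟨w, hw, -⟩ := Relation.TransGen.head'_iff.mp hzz
      exact no_out_C hR hd hc w hw
    · by_cases hztb : z = Sum.inr tb
      · subst hztb
        obtain ⟨w, hw, hw2⟩ := Relation.TransGen.head'_iff.mp hzz
        rcases rel_cases hR hd hw with h0 | ⟨x, hx1, _, _⟩ | ⟨_, c, hc, rfl⟩
        · exact no_rel_R_from_tb hR hd _ h0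
        · exact absurd hx1 (by simp)
        · rcases Relation.ReflTransGen.cases_head hw2 with heq | ⟨d, hd2, -⟩
          · exact absurd heq (by simp)
          · exact no_out_C hR hd hc _ hd2
      · have hz : (∀ c ∈ C, z ≠ Sum.inl c) ∧ z ≠ Sum.inr tb :=
          ⟨fun c hc he => hzC ⟨c, hc, he⟩, hztb⟩
        rcases causal_cases hR hd hz hzz with h0 | h0 | ⟨c, hc, h0⟩
        · exact hR.acyclic z h0
        · exact hztb h0
        · exact hzC ⟨c, hc, h0⟩
  -- finite_past
  · intro u hu
    by_cases hut : u = tb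
    · have hsub : {t : N.Amb | (extProc R tb B C pS b).causal (Sum.inr t) (Sum.inr u)} ⊆
          ⋃ x ∈ B, {t | R.causal (Sum.inr t) (Sum.inl x)} := by
        intro t ht
        simp only [Set.mem_setOf_eq] at ht
        have hlast : ∃ x ∈ B, (extProc R tb B C pS b).causal (Sum.inr t) (Sum.inl x) := by
          cases ht with
          | single e => exact e.elim
          | tail h e =>
            rename_i w'
            match w', e with
            | Sum.inl x, e =>
              have hxB : x ∈ B := by
                simp only [extProc, RawProc.rel] at e
                rw [if_pos hut] at e
                by_contra hx
                rw [if_neg hx] at e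
                exact absurd e (lt_irrefl 0)
              exact ⟨x, hxB, h⟩
            | Sum.inr _, e => exact e.elim
        obtain ⟨x, hxB, hc⟩ := hlast
        have httb : t ≠ tb := by
          rintro rfl
          obtain ⟨w, hw, hw2⟩ := Relation.TransGen.head'_iff.mp hc
          rcases rel_cases hR hd hw with h0 | ⟨y, hy1, _, _⟩ | ⟨_, c, hcC, rfl⟩
          · exact no_rel_R_from_tb hR hd _ h0
          · exact absurd hy1 (by simp)
          · rcases Relation.ReflTransGen.cases_head hw2 with heq | ⟨d, hd2, -⟩
            · rw [Sum.inl.injEq] at heq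
              exact B_notC hR hd hxB (heq ▸ hcC)
            · exact no_out_C hR hd hcC _ hd2
        have hz : (∀ c ∈ C, (Sum.inr t : N.Amb ⊕ N.Amb) ≠ Sum.inl c) ∧
            (Sum.inr t : N.Amb ⊕ N.Amb) ≠ Sum.inr tb := ⟨fun c _ => by simp, by simp [httb]⟩
        rcases causal_cases hR hd hz hc with h0 | h0 | ⟨c, hcC, h0⟩
        · exact Set.mem_biUnion hxB h0
        · exact absurd h0 (by simp)
        · rw [Sum.inl.injEq] at h0
          exact absurd (h0 ▸ hcC) (B_notC hR hd hxB)
      exact (Set.Finite.biUnion hd.B_fin (fun x _ => finite_past_place hR hd x)).subset hsub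
    · have hu' : u ∈ R.tr := hu.resolve_left hut
      have hsub : {t : N.Amb | (extProc R tb B C pS b).causal (Sum.inr t) (Sum.inr u)} ⊆
          insert tb {t | R.causal (Sum.inr t) (Sum.inr u)} := by
        intro t ht
        simp only [Set.mem_setOf_eq] at ht
        by_cases httb : t = tb
        · exact Set.mem_insert_iff.mpr (Or.inl httb)
        · right
          have hz : (∀ c ∈ C, (Sum.inr t : N.Amb ⊕ N.Amb) ≠ Sum.inl c) ∧
              (Sum.inr t : N.Amb ⊕ N.Amb) ≠ Sum.inr tb := ⟨fun c _ => by simp, by simp [httb]⟩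
          rcases causal_cases hR hd hz ht with h0 | h0 | ⟨c, hc, h0⟩
          · exact h0
          · rw [Sum.inr.injEq] at h0
            exact absurd h0 hut
          · exact absurd h0 (by simp)
      exact ((hR.finite_past u hu').insert tb).subset hsub
  -- init_fin
  · intro s
    rw [ext_init hR hd]
    have : {x | x ∈ R.init ∧ (extProc R tb B C pS b).piS x = s} =
        {x | x ∈ R.init ∧ R.piS x = s} := by
      ext x
      simp only [Set.mem_setOf_eq, extProc]
      exact and_congr_right fun hx => by rw [hd.pS_eq x hx.1]
    rw [this]
    exact hR.init_fin s
  -- init_marking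
  · intro s
    rw [ext_init hR hd]
    have : {x | x ∈ R.init ∧ (extProc R tb B C pS b).piS x = s} =
        {x | x ∈ R.init ∧ R.piS x = s} := by
      ext x
      simp only [Set.mem_setOf_eq, extProc]
      exact and_congr_right fun hx => by rw [hd.pS_eq x hx.1]
    rw [this]
    exact hR.init_marking s
  -- pre_fin
  · intro t ht
    by_cases htt : t = tb
    · have : {x | 0 < (extProc R tb B C pS b).Fst x t} = B := by
        ext x
        simp only [Set.mem_setOf_eq, extProc, if_pos htt]
        by_cases hx : x ∈ B <;> simp [hx]
      rw [this]; exact hd.B_fin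
    · have ht' : t ∈ R.tr := ht.resolve_left htt
      have : {x | 0 < (extProc R tb B C pS b).Fst x t} = {x | 0 < R.Fst x t} := by
        ext x
        simp only [Set.mem_setOf_eq, extProc, if_neg htt]
      rw [this]; exact hR.pre_fin t ht' 
  -- post_fin
  · intro t ht
    by_cases htt : t = tb
    · have : {x | 0 < (extProc R tb B C pS b).Fts t x} = C := by
        ext x
        simp only [Set.mem_setOf_eq, extProc, if_pos htt]
        by_cases hx : x ∈ C <;> simp [hx]
      rw [this]; exact hd.C_fin
    · have ht' : t ∈ R.tr := ht.resolve_left htt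
      have : {x | 0 < (extProc R tb B C pS b).Fts t x} = {x | 0 < R.Fts t x} := by
        ext x
        simp only [Set.mem_setOf_eq, extProc, if_neg htt]
      rw [this]; exact hR.post_fin t ht' 
  -- pre_match
  · intro t ht s
    by_cases htt : t = tb
    · have hfun : ∀ x, (extProc R tb B C pS b).Fst x t = if x ∈ B then 1 else 0 := by
        intro x; simp only [extProc, if_pos htt]
      have hpit : (extProc R tb B C pS b).piT t = b := by simp only [extProc, if_pos htt]
      rw [hpit]
      calc N.pre b s = {x | x ∈ B ∧ R.piS x = s}.ncard := (hd.B_fib s).symm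
        _ = ({x | (extProc R tb B C pS b).piS x = s} ∩ B).ncard := by
            congr 1
            ext x
            simp only [Set.mem_setOf_eq, Set.mem_inter_iff, extProc]
            constructor
            · rintro ⟨hx, hs⟩; exact ⟨by rw [hd.pS_eq x (B_pl hd hx)]; exact hs, hx⟩
            · rintro ⟨hs, hx⟩; exact ⟨hx, by rw [← hd.pS_eq x (B_pl hd hx)]; exact hs⟩
        _ = ∑ᶠ x ∈ {x | (extProc R tb B C pS b).piS x = s},
              (extProc R tb B C pS b).Fst x t := by
            rw [finsum_mem_congr rfl (fun x _ => hfun x),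
              finsum_mem_indicator _ _ (hd.B_fin.subset Set.inter_subset_right)]
    · have ht' : t ∈ R.tr := ht.resolve_left htt
      have hfun : ∀ x, (extProc R tb B C pS b).Fst x t = R.Fst x t := by
        intro x; simp only [extProc, if_neg htt]
      have hpit : (extProc R tb B C pS b).piT t = R.piT t := by simp only [extProc, if_neg htt]
      rw [hpit, hR.pre_match t ht' s, finsum_mem_congr rfl (fun x _ => hfun x)]
      apply finsum_mem_inter_support_eq'
      intro x hx
      have hxpl : x ∈ R.pl := (hR.fst_dom x t (Nat.pos_of_ne_zero hx)).1
      simp only [Set.mem_setOf_eq, extProc, hd.pS_eq x hxpl]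
  -- post_match
  · intro t ht s
    by_cases htt : t = tb
    · have hfun : ∀ x, (extProc R tb B C pS b).Fts t x = if x ∈ C then 1 else 0 := by
        intro x; simp only [extProc, if_pos htt]
      have hpit : (extProc R tb B C pS b).piT t = b := by simp only [extProc, if_pos htt]
      rw [hpit]
      calc N.post b s = {x | x ∈ C ∧ pS x = s}.ncard := (hd.C_fib s).symm
        _ = ({x | (extProc R tb B C pS b).piS x = s} ∩ C).ncard := by
            congr 1
            ext x
            simp only [Set.mem_setOf_eq, Set.mem_inter_iff, extProc]
            tauto
        _ = ∑ᶠ x ∈ {x | (extProc R tb B C pS b).piS x = s},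
              (extProc R tb B C pS b).Fts t x := by
            rw [finsum_mem_congr rfl (fun x _ => hfun x),
              finsum_mem_indicator _ _ (hd.C_fin.subset Set.inter_subset_right)]
    · have ht' : t ∈ R.tr := ht.resolve_left htt
      have hfun : ∀ x, (extProc R tb B C pS b).Fts t x = R.Fts t x := by
        intro x; simp only [extProc, if_neg htt]
      have hpit : (extProc R tb B C pS b).piT t = R.piT t := by simp only [extProc, if_neg htt]
      rw [hpit, hR.post_match t ht' s, finsum_mem_congr rfl (fun x _ => hfun x)]
      apply finsum_mem_inter_support_eq'
      intro x hx
      have hxpl : x ∈ R.pl := (hR.fts_dom t x (Nat.pos_of_ne_zero hx)).1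
      simp only [Set.mem_setOf_eq, extProc, hd.pS_eq x hxpl]

theorem stepExt : StepExt N R (extProc R tb B C pS b) b := by
  refine ⟨⟨Set.subset_union_left, Set.subset_insert _ _, ?_, ?_, ?_, (ext_init hR hd).symm⟩,
    tb, hd.tb_tr, rfl, by simp [extProc]⟩
  · intro x _ t ht
    have htb : t ≠ tb := fun he => hd.tb_tr (he ▸ ht)
    constructor <;> simp only [extProc, if_neg htb]
  · intro x hx
    exact (hd.pS_eq x hx).symm
  · intro t ht
    have htb : t ≠ tb := fun he => hd.tb_tr (he ▸ ht)
    simp only [extProc, if_neg htb]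

end ExtData

end Extension

section Fresh

open Cardinal

theorem exists_fresh_fun (N : Net) (U : Set N.Amb)
    (hU : #U ≤ #(N.S ⊕ N.T ⊕ ℕ)) :
    ∃ f : Option (N.S × ℕ) → N.Amb, Function.Injective f ∧ ∀ o, f o ∉ U := by
  set κ := #(N.S ⊕ N.T ⊕ ℕ) with hκ
  have hκinf : Cardinal.aleph0 ≤ κ := by
    rw [hκ]
    have : Function.Injective (fun n : ℕ => (Sum.inr (Sum.inr n) : N.S ⊕ N.T ⊕ ℕ)) := by
      intro x y hxy
      simpa using hxy
    calc Cardinal.aleph0 = #ℕ := Cardinal.mk_nat.symm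
      _ ≤ _ := Cardinal.mk_le_of_injective this
  have hAmb : #(N.Amb) = 2 ^ κ := by
    rw [hκ]
    exact Cardinal.mk_set
  have hcantor : κ < #(N.Amb) := hAmb ▸ Cardinal.cantor κ
  have hopt : #(Option (N.S × ℕ)) ≤ κ := by
    have h1 : #(N.S × ℕ) ≤ κ := by
      rw [Cardinal.mk_prod, Cardinal.mk_nat]
      have hS : Cardinal.lift.{0} #N.S ≤ κ := by
        simp only [Cardinal.lift_id]
        calc #N.S ≤ #(N.S ⊕ N.T ⊕ ℕ) := by
              rw [Cardinal.mk_sum]; simp only [Cardinal.lift_id]; exact le_self_add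
          _ = κ := hκ.symm
      calc Cardinal.lift.{0} #N.S * Cardinal.lift.{0} Cardinal.aleph0 ≤ κ * κ := by
            apply mul_le_mul' (by simpa using hS) (by simpa using hκinf)
        _ = κ := Cardinal.mul_eq_self hκinf
    rw [Cardinal.mk_option]
    calc #(N.S × ℕ) + 1 ≤ κ + κ := add_le_add h1 (le_trans (by norm_num) hκinf)
      _ = κ := Cardinal.add_eq_self hκinf
  have hcompl : κ ≤ #(↥Uᶜ) := by
    by_contra hle
    push_neg at hle
    have := Cardinal.mk_sum_compl U
    have : #N.Amb ≤ κ := by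
      rw [← this]
      calc #U + #(↥Uᶜ) ≤ κ + κ := add_le_add hU hle.le
        _ = κ := Cardinal.add_eq_self hκinf
    exact absurd this (not_le.mpr hcantor)
  obtain ⟨g⟩ := Cardinal.le_def _ _ |>.mp (hopt.trans hcompl)
  exact ⟨fun o => (g o).1, fun o o' h => g.injective (Subtype.ext h),
    fun o ho => (g o).2 ho⟩

end Fresh

section CardBound

open Cardinal

theorem pl_subset_init_union {N : Net} (R : RawProc N) (hR : IsProc N R) :
    R.pl ⊆ R.init ∪ ⋃ t ∈ R.tr, {x | 0 < R.Fts t x} := by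
  intro x hx
  by_cases h : ∀ t, R.Fts t x = 0
  · exact Or.inl ⟨hx, h⟩
  · push_neg at h
    obtain ⟨t, ht⟩ := h
    have hpos : 0 < R.Fts t x := Nat.pos_of_ne_zero ht
    exact Or.inr (Set.mem_biUnion (hR.fts_dom t x hpos).2 hpos)

theorem card_pl_tr_le {N : Net} (R : RawProc N) (hR : IsProc N R) (hRf : R.FiniteP) :
    #(↥(R.pl ∪ R.tr)) ≤ #(N.S ⊕ N.T ⊕ ℕ) := by
  set κ := #(N.S ⊕ N.T ⊕ ℕ) with hκ
  have hκinf : Cardinal.aleph0 ≤ κ := by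
    rw [hκ]
    have : Function.Injective (fun n : ℕ => (Sum.inr (Sum.inr n) : N.S ⊕ N.T ⊕ ℕ)) := by
      intro x y hxy; simpa using hxy
    calc Cardinal.aleph0 = #ℕ := Cardinal.mk_nat.symm
      _ ≤ _ := Cardinal.mk_le_of_injective this
  have hfin : ((⋃ t ∈ R.tr, {x | 0 < R.Fts t x}) ∪ R.tr).Finite :=
    ((Set.Finite.biUnion hRf (fun t ht => hR.post_fin t ht)).union hRf)
  have hinit : #(↥R.init) ≤ κ := by
    have hcov : R.init = ⋃ s : N.S, {x | x ∈ R.init ∧ R.piS x = s} := by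
      ext x
      simp only [Set.mem_iUnion, Set.mem_setOf_eq]
      exact ⟨fun hx => ⟨R.piS x, hx, rfl⟩, fun ⟨s, hx, _⟩ => hx⟩
    rw [hcov]
    calc #(↥(⋃ s : N.S, {x | x ∈ R.init ∧ R.piS x = s}))
        ≤ Cardinal.sum (fun s : N.S => #({x | x ∈ R.init ∧ R.piS x = s})) :=
          Cardinal.mk_iUnion_le_sum_mk
      _ ≤ Cardinal.sum (fun _ : N.S => Cardinal.aleph0) := by
          apply Cardinal.sum_le_sum
          intro s
          exact ((hR.init_fin s).lt_aleph0).le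
      _ = #N.S * Cardinal.aleph0 := Cardinal.sum_const' N.S Cardinal.aleph0
      _ ≤ κ * κ := by
          apply mul_le_mul' ?_ hκinf
          have : Function.Injective (fun s : N.S => (Sum.inl s : N.S ⊕ N.T ⊕ ℕ)) := by
            intro x y hxy; simpa using hxy
          exact Cardinal.mk_le_of_injective this
      _ = κ := Cardinal.mul_eq_self hκinf
  calc #(↥(R.pl ∪ R.tr))
      ≤ #(↥(R.init ∪ ((⋃ t ∈ R.tr, {x | 0 < R.Fts t x}) ∪ R.tr))) := by
        apply Cardinal.mk_le_mk_of_subset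
        intro x hx
        rcases hx with hx | hx
        · rcases pl_subset_init_union R hR hx with h | h
          · exact Or.inl h
          · exact Or.inr (Or.inl h)
        · exact Or.inr (Or.inr hx)
    _ ≤ #(↥R.init) + #(↥((⋃ t ∈ R.tr, {x | 0 < R.Fts t x}) ∪ R.tr)) := Cardinal.mk_union_le _ _
    _ ≤ κ + κ := add_le_add hinit (hfin.lt_aleph0.le.trans hκinf)
    _ = κ := Cardinal.add_eq_self hκinf

end CardBound

/-- Forward diamond for processes: if `P —a→ P'` and the step `{a,b}` is enabled
at `ĤP`, then there exist processes `Q`, `Q'` with `P' —b→ Q'` and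
`P —b→ Q —a→ Q'`. -/
theorem process_forward_diamond (N : Net) (P P' : RawProc N) (a b : N.T)
    (hP : IsProc N P) (hP' : IsProc N P') (hPf : P.FiniteP)
    (h1 : StepExt N P P' a)
    (h2 : N.Enabled P.endMark (Finsupp.single a 1 + Finsupp.single b 1)) :
    ∃ Q Q', IsProc N Q ∧ IsProc N Q' ∧
      StepExt N P' Q' b ∧ StepExt N P Q b ∧ StepExt N Q Q' a := by
  classical
  obtain ⟨⟨hpl_sub, htr_sub, hflow, hpiS, hpiT, hinit⟩, ta, hta, htr', hpiTa⟩ := h1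
  have htaP' : ta ∈ P'.tr := htr' ▸ Set.mem_insert _ _
  have hP'f : P'.FiniteP := by
    unfold RawProc.FiniteP
    rw [htr']
    exact hPf.insert ta
  -- the fibers of the final marking of P
  have hEfin : ∀ s, {x | x ∈ P.ends ∧ P.piS x = s}.Finite := by
    intro s
    have hsub : {x | x ∈ P.ends ∧ P.piS x = s} ⊆
        {x | x ∈ P.init ∧ P.piS x = s} ∪ ⋃ t ∈ P.tr, {x | 0 < P.Fts t x} := by
      intro x hx
      rcases pl_subset_init_union P hP hx.1.1 with h | h
      · exact Or.inl ⟨h, hx.2⟩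
      · exact Or.inr h
    exact ((hP.init_fin s).union (Set.Finite.biUnion hPf (fun t ht => hP.post_fin t ht))).subset
      hsub
  have hEcard : ∀ s, N.pre a s + N.pre b s ≤ {x | x ∈ P.ends ∧ P.piS x = s}.ncard := by
    intro s
    have hh := h2 s
    have hadd : N.preStep (Finsupp.single a 1 + Finsupp.single b 1) s
        = N.preStep (Finsupp.single a 1) s + N.preStep (Finsupp.single b 1) s :=
      Finsupp.sum_add_index' (fun t => zero_mul (N.pre t s)) (fun t m n => add_mul m n (N.pre t s))
    have hsa : N.preStep (Finsupp.single a 1) s = N.pre a s := by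
      unfold Net.preStep
      rw [Finsupp.sum_single_index (zero_mul (N.pre a s)), one_mul]
    have hsb : N.preStep (Finsupp.single b 1) s = N.pre b s := by
      unfold Net.preStep
      rw [Finsupp.sum_single_index (zero_mul (N.pre b s)), one_mul]
    rw [hadd, hsa, hsb] at hh
    exact hh
  -- the preplaces of `ta` in `P'` use up at most `pre a s` of each fiber
  have hS0 : ∀ s, {x | (x ∈ P.ends ∧ P.piS x = s) ∧ 0 < P'.Fst x ta}.ncard ≤ N.pre a s := by
    intro s
    have hmatch := hP'.pre_match ta htaP' s
    rw [hpiTa] at hmatch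
    have hS0fin : {x | (x ∈ P.ends ∧ P.piS x = s) ∧ 0 < P'.Fst x ta}.Finite :=
      (hEfin s).subset (fun x hx => hx.1)
    have hsupfin : ({x | P'.piS x = s} ∩ Function.support fun x => P'.Fst x ta).Finite :=
      Set.Finite.subset (hP'.pre_fin ta htaP')
        (fun x hx => Nat.pos_of_ne_zero hx.2)
    calc {x | (x ∈ P.ends ∧ P.piS x = s) ∧ 0 < P'.Fst x ta}.ncard
        ≤ ∑ᶠ x ∈ {x | (x ∈ P.ends ∧ P.piS x = s) ∧ 0 < P'.Fst x ta}, P'.Fst x ta :=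
          le_finsum_mem_nat _ _ hS0fin (fun x hx => hx.2)
      _ ≤ ∑ᶠ x ∈ {x | P'.piS x = s}, P'.Fst x ta := by
          apply finsum_mem_mono_nat _ _ _ ?_ hsupfin
          intro x hx
          rw [Set.mem_setOf_eq, ← hpiS x hx.1.1.1]
          exact hx.1.2
      _ = N.pre a s := hmatch.symm
  have hD : ∀ s, N.pre b s ≤ {x | (x ∈ P.ends ∧ P.piS x = s) ∧ P'.Fst x ta = 0}.ncard := by
    intro s
    have hdiff : {x | x ∈ P.ends ∧ P.piS x = s} \
        {x | (x ∈ P.ends ∧ P.piS x = s) ∧ 0 < P'.Fst x ta} =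
        {x | (x ∈ P.ends ∧ P.piS x = s) ∧ P'.Fst x ta = 0} := by
      ext x
      simp only [Set.mem_diff, Set.mem_setOf_eq]
      constructor
      · rintro ⟨hx, hnx⟩
        refine ⟨hx, ?_⟩
        by_contra hne
        exact hnx ⟨hx, Nat.pos_of_ne_zero hne⟩
      · rintro ⟨hx, hz⟩
        exact ⟨hx, fun hc => by omega⟩
    have h4 := Set.ncard_diff_add_ncard_of_subset
      (show {x | (x ∈ P.ends ∧ P.piS x = s) ∧ 0 < P'.Fst x ta} ⊆
        {x | x ∈ P.ends ∧ P.piS x = s} from fun x hx => hx.1) (hEfin s)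
    rw [hdiff] at h4
    have := hEcard s
    have := hS0 s
    omega
  -- choose the preplaces of the new transition
  have hBS : ∀ s, ∃ Bs, Bs ⊆ {x | (x ∈ P.ends ∧ P.piS x = s) ∧ P'.Fst x ta = 0} ∧
      Bs.ncard = N.pre b s := fun s => Set.exists_subset_card_eq (hD s)
  choose Bs hBs1 hBs2 using hBS
  have hBsfin : ∀ s, (Bs s).Finite :=
    fun s => ((hEfin s).subset (fun x hx => hx.1)).subset (hBs1 s)
  set B := ⋃ s, Bs s with hBdef
  have hBmem : ∀ s, ∀ x ∈ B, P.piS x = s → x ∈ Bs s := by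
    intro s x hx hxs
    obtain ⟨s', hs'⟩ := Set.mem_iUnion.mp hx
    have hthis : P.piS x = s' := (hBs1 s' hs').1.2
    have hss : s' = s := by rw [← hthis, hxs]
    rwa [hss] at hs'
  have hBfib : ∀ s, {x | x ∈ B ∧ P.piS x = s} = Bs s := by
    intro s
    ext x
    constructor
    · rintro ⟨hx, hxs⟩
      exact hBmem s x hx hxs
    · intro hx
      exact ⟨Set.mem_iUnion.mpr ⟨s, hx⟩, (hBs1 s hx).1.2⟩
  have hBfin : B.Finite := by
    have hsub : B ⊆ ⋃ s ∈ Function.support (N.pre b), Bs s := by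
      intro x hx
      obtain ⟨s, hs⟩ := Set.mem_iUnion.mp hx
      have hns : N.pre b s ≠ 0 := by
        intro h0
        have : (Bs s).ncard = 0 := by rw [hBs2 s, h0]
        rw [Set.ncard_eq_zero (hBsfin s)] at this
        exact absurd (this ▸ hs) (Set.notMem_empty x)
      exact Set.mem_biUnion hns hs
    exact (Set.Finite.biUnion (N.pre_fin b) (fun s _ => hBsfin s)).subset hsub
  have hBendsP : B ⊆ P.ends := by
    intro x hx
    obtain ⟨s, hs⟩ := Set.mem_iUnion.mp hx
    exact (hBs1 s hs).1.1
  have hBplP : B ⊆ P.pl := fun x hx => (hBendsP hx).1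
  have hBendsP' : B ⊆ P'.ends := by
    intro x hx
    obtain ⟨s, hs⟩ := Set.mem_iUnion.mp hx
    have hxe : x ∈ P.ends := (hBs1 s hs).1.1
    refine ⟨hpl_sub hxe.1, fun t => ?_⟩
    by_cases hti : t ∈ P.tr
    · rw [← (hflow x hxe.1 t hti).1]
      exact hxe.2 t
    · by_cases hti' : t = ta
      · rw [hti']
        exact (hBs1 s hs).2
      · by_contra hne
        have : t ∈ P'.tr := (hP'.fst_dom x t (Nat.pos_of_ne_zero hne)).2
        rw [htr'] at this
        exact hti ((this.resolve_left hti'))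
  -- fresh elements
  obtain ⟨f, hfinj, hffresh⟩ := exists_fresh_fun N (P'.pl ∪ P'.tr) (card_pl_tr_le P' hP' hP'f)
  set tb := f none with htbdef
  set Cs : N.S → Set N.Amb := fun s => (fun i => f (some (s, i))) '' Set.Iio (N.post b s)
    with hCsdef
  set C := ⋃ s, Cs s with hCdef
  set pS : N.Amb → N.S := fun x =>
    if h : ∃ p : N.S × ℕ, f (some p) = x ∧ p.2 < N.post b p.1 then h.choose.1 else P'.piS x
    with hpSdef
  have hCsmem : ∀ s x, x ∈ Cs s ↔ ∃ i, i < N.post b s ∧ f (some (s, i)) = x := by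
    intro s x
    simp only [hCsdef, Set.mem_image, Set.mem_Iio]
  have hpSC : ∀ s, ∀ x ∈ Cs s, pS x = s := by
    intro s x hx
    obtain ⟨i, hi, hfi⟩ := (hCsmem s x).mp hx
    have hex : ∃ p : N.S × ℕ, f (some p) = x ∧ p.2 < N.post b p.1 := ⟨(s, i), hfi, hi⟩
    rw [hpSdef]
    simp only [dif_pos hex]
    have hspec := hex.choose_spec
    have heq : (some hex.choose : Option (N.S × ℕ)) = some (s, i) :=
      hfinj (hspec.1.trans hfi.symm)
    rw [Option.some.injEq] at heq
    rw [heq]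
  have hCfresh : ∀ c ∈ C, c ∉ P'.pl ∪ P'.tr := by
    intro c hc
    obtain ⟨s, hs⟩ := Set.mem_iUnion.mp hc
    obtain ⟨i, hi, hfi⟩ := (hCsmem s c).mp hs
    exact hfi ▸ hffresh (some (s, i))
  have hCplP' : ∀ c ∈ C, c ∉ P'.pl := fun c hc h => hCfresh c hc (Or.inl h)
  have hCplP : ∀ c ∈ C, c ∉ P.pl := fun c hc h => hCplP' c hc (hpl_sub h)
  have htbP' : tb ∉ P'.tr := fun h => hffresh none (Or.inr h)
  have htbP : tb ∉ P.tr := fun h => htbP' (htr_sub h)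
  have htbC : tb ∉ C := by
    intro h
    obtain ⟨s, hs⟩ := Set.mem_iUnion.mp h
    obtain ⟨i, hi, hfi⟩ := (hCsmem s tb).mp hs
    exact Option.some_ne_none _ (hfinj hfi)
  have hCsfin : ∀ s, (Cs s).Finite := fun s => (Set.finite_Iio _).image _
  have hCscard : ∀ s, (Cs s).ncard = N.post b s := by
    intro s
    rw [hCsdef]
    rw [Set.ncard_image_of_injective _ (fun i j hij => by
      have := hfinj hij
      rw [Option.some.injEq, Prod.mk.injEq] at this
      exact this.2)]
    rw [Set.ncard_eq_toFinset_card']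
    simp
  have hCfib : ∀ s, {x | x ∈ C ∧ pS x = s} = Cs s := by
    intro s
    ext x
    constructor
    · rintro ⟨hx, hxs⟩
      obtain ⟨s', hs'⟩ := Set.mem_iUnion.mp hx
      have : pS x = s' := hpSC s' x hs'
      rw [hxs] at this
      exact this ▸ hs'
    · intro hx
      exact ⟨Set.mem_iUnion.mpr ⟨s, hx⟩, hpSC s x hx⟩
  have hCfin : C.Finite := by
    have hsub : C ⊆ ⋃ s ∈ Function.support (N.post b), Cs s := by
      intro x hx
      obtain ⟨s, hs⟩ := Set.mem_iUnion.mp hx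
      have hns : N.post b s ≠ 0 := by
        intro h0
        obtain ⟨i, hi, _⟩ := (hCsmem s x).mp hs
        omega
      exact Set.mem_biUnion hns hs
    exact (Set.Finite.biUnion (N.post_fin b) (fun s _ => hCsfin s)).subset hsub
  have hpSP' : ∀ x ∈ P'.pl, pS x = P'.piS x := by
    intro x hx
    rw [hpSdef]
    have hnex : ¬ ∃ p : N.S × ℕ, f (some p) = x ∧ p.2 < N.post b p.1 := by
      rintro ⟨p, hp1, hp2⟩
      exact hffresh (some p) (Or.inl (hp1 ▸ hx))
    simp only [dif_neg hnex]
  have hpSP : ∀ x ∈ P.pl, pS x = P.piS x := by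
    intro x hx
    rw [hpSP' x (hpl_sub hx), ← hpiS x hx]
  -- the extension data
  have hdP : ExtData P tb B C pS b :=
    ⟨htbP, htbC, hCplP, hCfin, hBendsP, hBfin, hpSP,
      fun s => (hBfib s) ▸ hBs2 s, fun s => (hCfib s) ▸ hCscard s⟩
  have hdP' : ExtData P' tb B C pS b := by
    refine ⟨htbP', htbC, hCplP', hCfin, hBendsP', hBfin, hpSP', fun s => ?_,
      fun s => (hCfib s) ▸ hCscard s⟩
    have : {x | x ∈ B ∧ P'.piS x = s} = {x | x ∈ B ∧ P.piS x = s} := by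
      ext x
      exact and_congr_right fun hx => by rw [← hpiS x (hBplP hx)]
    rw [this, hBfib s]
    exact hBs2 s
  have htatb : ta ≠ tb := fun h => htbP' (h ▸ htaP')
  refine ⟨extProc P tb B C pS b, extProc P' tb B C pS b,
    ExtData.isProc hP hdP, ExtData.isProc hP' hdP',
    ExtData.stepExt hP' hdP', ExtData.stepExt hP hdP, ?_⟩
  -- StepExt Q Q' a
  constructor
  · refine ⟨?_, ?_, ?_, ?_, ?_, ?_⟩
    · exact Set.union_subset_union_left C hpl_sub
    · exact Set.insert_subset_insert htr_sub
    · intro x hx t ht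
      by_cases htt : t = tb
      · constructor <;> simp only [extProc, if_pos htt]
      · have ht' : t ∈ P.tr := ht.resolve_left htt
        rcases hx with hx | hx
        · constructor <;> simp only [extProc, if_neg htt]
          · exact (hflow x hx t ht').1
          · exact (hflow x hx t ht').2
        · constructor <;> simp only [extProc, if_neg htt]
          · have h1 : P.Fst x t = 0 := by
              by_contra h
              exact hCplP x hx (hP.fst_dom x t (Nat.pos_of_ne_zero h)).1
            have h2 : P'.Fst x t = 0 := by
              by_contra h
              exact hCplP' x hx (hP'.fst_dom x t (Nat.pos_of_ne_zero h)).1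
            rw [h1, h2]
          · have h1 : P.Fts t x = 0 := by
              by_contra h
              exact hCplP x hx (hP.fts_dom t x (Nat.pos_of_ne_zero h)).1
            have h2 : P'.Fts t x = 0 := by
              by_contra h
              exact hCplP' x hx (hP'.fts_dom t x (Nat.pos_of_ne_zero h)).1
            rw [h1, h2]
    · intro x hx
      rfl
    · intro t ht
      by_cases htt : t = tb
      · simp only [extProc, if_pos htt]
      · have ht' : t ∈ P.tr := ht.resolve_left htt
        simp only [extProc, if_neg htt]
        exact hpiT t ht'
    · rw [ExtData.ext_init hP hdP, ExtData.ext_init hP' hdP', hinit]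
  · refine ⟨ta, ?_, ?_, ?_⟩
    · rintro (h | h)
      · exact htatb h
      · exact hta h
    · show insert tb P'.tr = insert ta (insert tb P.tr)
      rw [htr', Set.insert_comm]
    · show (if ta = tb then b else P'.piT ta) = a
      rw [if_neg htatb]
      exact hpiTa
end
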